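/- arXiv:2305.09413 — 7 statements merged into one kernel-verified Lean document; each statement's English description precedes it below -/
import Mathlib

section
/- Let H be a complex Hilbert space, a : H → H a bounded linear operator and c > 0 such that Re⟪x, a x⟫ ≥ c‖x‖² for all x ∈ H. Then a is bijective and the bounded inverse a⁻¹ satisfies Re⟪y, a⁻¹ y⟫ ≥ c‖a‖⁻²‖y‖² for all y ∈ H. -/
/-!
A coercive operator is bounded below, `c‖x‖ ≤ ‖a x‖`, so it is injective with closed range;
a vector orthogonal to the range satisfies `c‖y‖² ≤ Re⟪y, a y⟫ = 0`, so the range is everything.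
For the inverse `b`, write `y = a x`: then `Re⟪y, b y⟫ = Re⟪a x, x⟫ ≥ c‖x‖² ≥ c‖a‖⁻²‖y‖²`.
-/

open RCLike

namespace ContinuousLinearMap

variable {𝕜 E : Type*} [RCLike 𝕜] [NormedAddCommGroup E] [InnerProductSpace 𝕜 E]

def IsCoerciveWith (c : ℝ) (a : E →L[𝕜] E) : Prop :=
  ∀ x, c * ‖x‖ ^ 2 ≤ re (inner 𝕜 x (a x))

lemma inv_sq_opNorm_mul_sq_norm_apply_le {F : Type*} [NormedAddCommGroup F] [NormedSpace 𝕜 F]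
    (a : E →L[𝕜] F) (x : E) : (‖a‖ ^ 2)⁻¹ * ‖a x‖ ^ 2 ≤ ‖x‖ ^ 2 := by
  rcases (norm_nonneg a).eq_or_lt with ha | ha
  · simp [← ha]
  · rw [inv_mul_le_iff₀ (by positivity), ← mul_pow]
    exact pow_le_pow_left₀ (norm_nonneg _) (a.le_opNorm x) 2

namespace IsCoerciveWith

variable {a : E →L[𝕜] E} {c : ℝ}

lemma mul_norm_le_norm_apply (h : IsCoerciveWith c a) (x : E) : c * ‖x‖ ≤ ‖a x‖ := by
  rcases (norm_nonneg x).eq_or_lt with hx | hx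
  · simp [norm_eq_zero.mp hx.symm]
  refine le_of_mul_le_mul_right ?_ hx
  calc c * ‖x‖ * ‖x‖ = c * ‖x‖ ^ 2 := by ring
    _ ≤ re (inner 𝕜 x (a x)) := h x
    _ ≤ ‖inner 𝕜 x (a x)‖ := re_le_norm _
    _ ≤ ‖x‖ * ‖a x‖ := norm_inner_le_norm _ _
    _ = ‖a x‖ * ‖x‖ := mul_comm _ _

lemma antilipschitz (h : IsCoerciveWith c a) (hc : 0 < c) :
    AntilipschitzWith ⟨c⁻¹, (inv_pos.mpr hc).le⟩ a :=
  a.antilipschitz_of_bound fun x => (le_inv_mul_iff₀ hc).mpr (h.mul_norm_le_norm_apply x)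

lemma ker_eq_bot (h : IsCoerciveWith c a) (hc : 0 < c) : a.ker = ⊥ :=
  LinearMap.ker_eq_bot.mpr (h.antilipschitz hc).injective

lemma orthogonal_range_eq_bot (h : IsCoerciveWith c a) (hc : 0 < c) : a.rangeᗮ = ⊥ := by
  refine (Submodule.eq_bot_iff _).mpr fun y hy => ?_
  have hzero : re (inner 𝕜 y (a y)) = 0 := by
    rw [inner_re_symm, hy (a y) (LinearMap.mem_range_self _ y), map_zero]
  have hy0 : c * ‖y‖ ^ 2 ≤ 0 := hzero ▸ h y
  simpa using nonpos_of_mul_nonpos_right hy0 hc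

lemma range_eq_top [CompleteSpace E] (h : IsCoerciveWith c a) (hc : 0 < c) : a.range = ⊤ := by
  have : CompleteSpace a.range :=
    ((h.antilipschitz hc).isClosed_range a.uniformContinuous).completeSpace_coe
  exact Submodule.orthogonal_eq_bot_iff.mp (h.orthogonal_range_eq_bot hc)

lemma of_rightInverse (h : IsCoerciveWith c a) (hc : 0 ≤ c) {b : E →L[𝕜] E}
    (hab : ∀ y, a (b y) = y) : IsCoerciveWith (c * (‖a‖ ^ 2)⁻¹) b := by
  intro y
  calc c * (‖a‖ ^ 2)⁻¹ * ‖y‖ ^ 2 = c * ((‖a‖ ^ 2)⁻¹ * ‖a (b y)‖ ^ 2) := by rw [hab, mul_assoc]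
    _ ≤ c * ‖b y‖ ^ 2 := by gcongr; exact inv_sq_opNorm_mul_sq_norm_apply_le a (b y)
    _ ≤ re (inner 𝕜 (b y) (a (b y))) := h (b y)
    _ = re (inner 𝕜 y (b y)) := by rw [hab, inner_re_symm]

end IsCoerciveWith

end ContinuousLinearMap

open ContinuousLinearMap in
/-- Let `H` be a complex Hilbert space, `a : H → H` a bounded linear
operator and `c > 0` such that `Re⟪x, a x⟫ ≥ c‖x‖²` for all `x ∈ H`. Then `a` is
bijective and the bounded inverse `a⁻¹` satisfies `Re⟪y, a⁻¹ y⟫ ≥ c‖a‖⁻²‖y‖²` for all `y`. -/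
theorem stmt1 {H : Type*} [NormedAddCommGroup H] [InnerProductSpace ℂ H] [CompleteSpace H]
    (a : H →L[ℂ] H) (c : ℝ) (hc : 0 < c)
    (hcoer : ∀ x : H, c * ‖x‖ ^ 2 ≤ (inner ℂ x (a x) : ℂ).re) :
    Function.Bijective a ∧
      ∃ b : H →L[ℂ] H, (∀ x, b (a x) = x) ∧ (∀ x, a (b x) = x) ∧
        ∀ y : H, c * (‖a‖ ^ 2)⁻¹ * ‖y‖ ^ 2 ≤ (inner ℂ y (b y) : ℂ).re := by
  have ha : IsCoerciveWith c a := hcoer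
  let e := ContinuousLinearEquiv.ofBijective a (ha.ker_eq_bot hc) (ha.range_eq_top hc)
  exact ⟨e.bijective, e.symm, e.symm_apply_apply, e.apply_symm_apply,
    ha.of_rightInverse hc.le e.apply_symm_apply⟩
end

section
/- Let H be a complex Hilbert space and C : dom(C) ⊆ H → H a densely defined closed linear operator. Define BD(C) := {u ∈ dom(C) : C u ∈ dom(C), C(C u) = -u}. Then the map C_BD : u ↦ C u maps BD(C) bijectively onto BD(C), its inverse is u ↦ -C u, it preserves the graph inner product (for all u, v ∈ BD(C): ⟪C u, C v⟫ + ⟪C(C u), C(C v)⟫ = ⟪u, v⟫ + ⟪C u, C v⟫), and it is skew-symmetric with respect to the graph inner product: for all u, v ∈ BD(C), ⟪C u, v⟫ + ⟪C(C u), C v⟫ = -(⟪u, C v⟫ + ⟪C u, C(C v)⟫). -/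
/-- The abstract boundary data space `BD(C) = {u ∈ dom(C) : C u ∈ dom(C), C (C u) = -u}`,
as a subset of `dom(C)`, for a partially defined operator `C : H →ₗ. H`. -/
def boundaryDataCurl {H : Type*}
    [NormedAddCommGroup H] [InnerProductSpace ℂ H]
    (C : H →ₗ.[ℂ] H) : Set C.domain :=
  {u | ∃ h : C u ∈ C.domain, C ⟨C u, h⟩ = -(u : H)}

namespace boundaryDataCurl

variable {H : Type*} [NormedAddCommGroup H] [InnerProductSpace ℂ H]
  {C : H →ₗ.[ℂ] H} {u v : C.domain}

lemma apply_apply (hu : u ∈ boundaryDataCurl C) (h : C u ∈ C.domain) :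
    C ⟨C u, h⟩ = -(u : H) :=
  hu.2

lemma neg_apply_apply (hu : u ∈ boundaryDataCurl C) (h : C u ∈ C.domain) :
    -(C ⟨C u, h⟩) = u := by
  rw [apply_apply hu h, neg_neg]

lemma apply_mk_neg_apply (hu : u ∈ boundaryDataCurl C) (h : -(C u) ∈ C.domain) :
    C ⟨-(C u), h⟩ = u := by
  have hmk : (⟨-(C u), h⟩ : C.domain) = -⟨C u, hu.1⟩ := rfl
  rw [hmk, C.map_neg, apply_apply hu hu.1, neg_neg]

lemma mk_apply_mem (hu : u ∈ boundaryDataCurl C) (h : C u ∈ C.domain) :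
    (⟨C u, h⟩ : C.domain) ∈ boundaryDataCurl C := by
  have hmk : (⟨C ⟨C u, h⟩, apply_apply hu h ▸ neg_mem u.2⟩ : C.domain) = -u :=
    Subtype.ext (apply_apply hu h)
  exact ⟨_, by rw [hmk, C.map_neg]⟩

lemma mk_neg_apply_mem (hu : u ∈ boundaryDataCurl C) (h : -(C u) ∈ C.domain) :
    (⟨-(C u), h⟩ : C.domain) ∈ boundaryDataCurl C := by
  have hmk : (⟨C ⟨-(C u), h⟩, apply_mk_neg_apply hu h ▸ u.2⟩ : C.domain) = u :=
    Subtype.ext (apply_mk_neg_apply hu h)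
  exact ⟨_, by rw [hmk, neg_neg]⟩

lemma graph_inner_apply_apply (hu : u ∈ boundaryDataCurl C) (hv : v ∈ boundaryDataCurl C)
    (hCu : C u ∈ C.domain) (hCv : C v ∈ C.domain) :
    (inner ℂ (C u) (C v) : ℂ) + inner ℂ (C ⟨C u, hCu⟩) (C ⟨C v, hCv⟩) =
      inner ℂ (u : H) (v : H) + inner ℂ (C u) (C v) := by
  rw [apply_apply hu hCu, apply_apply hv hCv, inner_neg_neg, add_comm]

lemma graph_inner_apply_left_eq_neg (hu : u ∈ boundaryDataCurl C) (hv : v ∈ boundaryDataCurl C)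
    (hCu : C u ∈ C.domain) (hCv : C v ∈ C.domain) :
    (inner ℂ (C u) (v : H) : ℂ) + inner ℂ (C ⟨C u, hCu⟩) (C v) =
      -(inner ℂ (u : H) (C v) + inner ℂ (C u) (C ⟨C v, hCv⟩)) := by
  rw [apply_apply hu hCu, apply_apply hv hCv, inner_neg_left, inner_neg_right, neg_add,
    neg_neg, add_comm]

end boundaryDataCurl

open boundaryDataCurl in
theorem stmt5_general {H : Type*}
    [NormedAddCommGroup H] [InnerProductSpace ℂ H]
    (C : H →ₗ.[ℂ] H) :
    -- `C_BD` maps `BD(C)` into `BD(C)`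
    (∀ u : C.domain, u ∈ boundaryDataCurl C → ∀ h : C u ∈ C.domain,
        (⟨C u, h⟩ : C.domain) ∈ boundaryDataCurl C) ∧
    -- `u ↦ -C u` maps `BD(C)` into `BD(C)`
    (∀ u : C.domain, u ∈ boundaryDataCurl C → ∀ h : -(C u) ∈ C.domain,
        (⟨-(C u), h⟩ : C.domain) ∈ boundaryDataCurl C) ∧
    -- `u ↦ -C u` is a left inverse of `C_BD` on `BD(C)`
    (∀ u : C.domain, u ∈ boundaryDataCurl C → ∀ h : C u ∈ C.domain,
        -(C ⟨C u, h⟩) = (u : H)) ∧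
    -- `u ↦ -C u` is a right inverse of `C_BD` on `BD(C)`
    (∀ u : C.domain, u ∈ boundaryDataCurl C → ∀ h : -(C u) ∈ C.domain,
        C ⟨-(C u), h⟩ = (u : H)) ∧
    -- `C_BD` preserves the graph inner product
    (∀ u v : C.domain, u ∈ boundaryDataCurl C → v ∈ boundaryDataCurl C →
      ∀ (hu : C u ∈ C.domain) (hv : C v ∈ C.domain),
        (inner ℂ (C u) (C v) : ℂ) + inner ℂ (C ⟨C u, hu⟩) (C ⟨C v, hv⟩) =
          (inner ℂ (u : H) (v : H) : ℂ) + inner ℂ (C u) (C v)) ∧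
    -- `C_BD` is skew-symmetric with respect to the graph inner product
    (∀ u v : C.domain, u ∈ boundaryDataCurl C → v ∈ boundaryDataCurl C →
      ∀ (hu : C u ∈ C.domain) (hv : C v ∈ C.domain),
        (inner ℂ (C u) (v : H) : ℂ) + inner ℂ (C ⟨C u, hu⟩) (C v) =
          -((inner ℂ (u : H) (C v) : ℂ) + inner ℂ (C u) (C ⟨C v, hv⟩))) :=
  ⟨fun _ hu => mk_apply_mem hu, fun _ hu => mk_neg_apply_mem hu,
    fun _ hu => neg_apply_apply hu, fun _ hu => apply_mk_neg_apply hu,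
    fun _ _ hu hv => graph_inner_apply_apply hu hv,
    fun _ _ hu hv => graph_inner_apply_left_eq_neg hu hv⟩

/-- For a densely defined closed operator `C` on `H`, the map `u ↦ C u`
maps `BD(C)` bijectively onto `BD(C)` with inverse `u ↦ -C u`, preserves the
graph inner product, and is skew-symmetric with respect to the graph inner product. -/
theorem stmt5 {H : Type*}
    [NormedAddCommGroup H] [InnerProductSpace ℂ H] [CompleteSpace H]
    (C : H →ₗ.[ℂ] H)
    (hCdense : Dense (C.domain : Set H)) (hCclosed : C.IsClosed) :
    -- `C_BD` maps `BD(C)` into `BD(C)`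
    (∀ u : C.domain, u ∈ boundaryDataCurl C → ∀ h : C u ∈ C.domain,
        (⟨C u, h⟩ : C.domain) ∈ boundaryDataCurl C) ∧
    -- `u ↦ -C u` maps `BD(C)` into `BD(C)`
    (∀ u : C.domain, u ∈ boundaryDataCurl C → ∀ h : -(C u) ∈ C.domain,
        (⟨-(C u), h⟩ : C.domain) ∈ boundaryDataCurl C) ∧
    -- `u ↦ -C u` is a left inverse of `C_BD` on `BD(C)`
    (∀ u : C.domain, u ∈ boundaryDataCurl C → ∀ h : C u ∈ C.domain,
        -(C ⟨C u, h⟩) = (u : H)) ∧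
    -- `u ↦ -C u` is a right inverse of `C_BD` on `BD(C)`
    (∀ u : C.domain, u ∈ boundaryDataCurl C → ∀ h : -(C u) ∈ C.domain,
        C ⟨-(C u), h⟩ = (u : H)) ∧
    -- `C_BD` preserves the graph inner product
    (∀ u v : C.domain, u ∈ boundaryDataCurl C → v ∈ boundaryDataCurl C →
      ∀ (hu : C u ∈ C.domain) (hv : C v ∈ C.domain),
        (inner ℂ (C u) (C v) : ℂ) + inner ℂ (C ⟨C u, hu⟩) (C ⟨C v, hv⟩) =
          (inner ℂ (u : H) (v : H) : ℂ) + inner ℂ (C u) (C v)) ∧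
    -- `C_BD` is skew-symmetric with respect to the graph inner product
    (∀ u v : C.domain, u ∈ boundaryDataCurl C → v ∈ boundaryDataCurl C →
      ∀ (hu : C u ∈ C.domain) (hv : C v ∈ C.domain),
        (inner ℂ (C u) (v : H) : ℂ) + inner ℂ (C ⟨C u, hu⟩) (C v) =
          -((inner ℂ (u : H) (C v) : ℂ) + inner ℂ (C u) (C ⟨C v, hv⟩))) :=
  stmt5_general C
end

section
/- Let H, K be complex Hilbert spaces, A : dom(A) ⊆ H → K and B : dom(B) ⊆ K → H densely defined closed linear operators, and A₀ ⊆ A, B₀ ⊆ B densely defined restrictions such that ⟪B U, u₀⟫_H + ⟪U, A u₀⟫_K = 0 for all U ∈ dom(B), u₀ ∈ dom(A₀), and ⟪B U₀, u⟫_H + ⟪U₀, A u⟫_K = 0 for all u ∈ dom(A), U₀ ∈ dom(B₀) (both hold when A₀* = -B and B₀* = -A). Suppose u ∈ dom(A) decomposes as u = u₀ + u₁ with u₀ ∈ dom(A₀) and u₁ ∈ dom(A), and U ∈ dom(B) decomposes as U = U₀ + U₁ with U₀ ∈ dom(B₀) and U₁ ∈ dom(B). Then ⟪B U, u⟫_H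 + ⟪U, A u⟫_K = ⟪B U₁, u₁⟫_H + ⟪U₁, A u₁⟫_K. -/
/-!
Both sides are values of the sesquilinear boundary form `β(U, u) = ⟪B U, u⟫ + ⟪U, A u⟫` on
`dom(B) × dom(A)`. The two hypotheses say that `β` vanishes as soon as one argument lies in the
smaller domain, so expanding `β(U₀ + U₁, u₀ + u₁)` bilinearly leaves only `β(U₁, u₁)`.
-/

namespace LinearPMap

variable {𝕜 H K : Type*} [RCLike 𝕜]
  [NormedAddCommGroup H] [InnerProductSpace 𝕜 H] [NormedAddCommGroup K] [InnerProductSpace 𝕜 K]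

def boundaryForm (A : H →ₗ.[𝕜] K) (B : K →ₗ.[𝕜] H) (U : B.domain) (u : A.domain) : 𝕜 :=
  inner 𝕜 (B U) (u : H) + inner 𝕜 (U : K) (A u)

variable {A A₀ : H →ₗ.[𝕜] K} {B B₀ : K →ₗ.[𝕜] H}

theorem boundaryForm_add_left (U V : B.domain) (u : A.domain) :
    boundaryForm A B (U + V) u = boundaryForm A B U u + boundaryForm A B V u := by
  simp only [boundaryForm, B.map_add, Submodule.coe_add, inner_add_left]
  ring

theorem boundaryForm_add_right (U : B.domain) (u v : A.domain) :
    boundaryForm A B U (u + v) = boundaryForm A B U u + boundaryForm A B U v := by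
  simp only [boundaryForm, A.map_add, Submodule.coe_add, inner_add_right]
  ring

theorem boundaryForm_inclusion_left (hB : B₀ ≤ B) (U₀ : B₀.domain) (u : A.domain) :
    boundaryForm A B (Submodule.inclusion hB.1 U₀) u =
      inner 𝕜 (B₀ U₀) (u : H) + inner 𝕜 (U₀ : K) (A u) := by
  rw [boundaryForm, ← apply_comp_inclusion hB, Submodule.coe_inclusion]

theorem boundaryForm_inclusion_right (hA : A₀ ≤ A) (U : B.domain) (u₀ : A₀.domain) :
    boundaryForm A B U (Submodule.inclusion hA.1 u₀) =
      inner 𝕜 (B U) (u₀ : H) + inner 𝕜 (U : K) (A₀ u₀) := by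
  rw [boundaryForm, ← apply_comp_inclusion hA, Submodule.coe_inclusion]

end LinearPMap

theorem stmt6_general {H K : Type*}
    [NormedAddCommGroup H] [InnerProductSpace ℂ H]
    [NormedAddCommGroup K] [InnerProductSpace ℂ K]
    (A A₀ : H →ₗ.[ℂ] K) (B B₀ : K →ₗ.[ℂ] H)
    (hA₀A : A₀ ≤ A) (hB₀B : B₀ ≤ B)
    (h1 : ∀ (U : B.domain) (u₀ : A₀.domain),
      (inner ℂ (B U) (u₀ : H) : ℂ) + inner ℂ (U : K) (A₀ u₀) = 0)
    (h2 : ∀ (u : A.domain) (U₀ : B₀.domain),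
      (inner ℂ (B₀ U₀) (u : H) : ℂ) + inner ℂ (U₀ : K) (A u) = 0)
    (u u₁ : A.domain) (u₀ : A₀.domain) (hu : (u : H) = (u₀ : H) + (u₁ : H))
    (U U₁ : B.domain) (U₀ : B₀.domain) (hU : (U : K) = (U₀ : K) + (U₁ : K)) :
    (inner ℂ (B U) (u : H) : ℂ) + inner ℂ (U : K) (A u) =
      (inner ℂ (B U₁) (u₁ : H) : ℂ) + inner ℂ (U₁ : K) (A u₁) := by
  have hU' : U = Submodule.inclusion hB₀B.1 U₀ + U₁ := Subtype.ext hU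
  have hu' : u = Submodule.inclusion hA₀A.1 u₀ + u₁ := Subtype.ext hu
  change LinearPMap.boundaryForm A B U u = LinearPMap.boundaryForm A B U₁ u₁
  rw [hU', LinearPMap.boundaryForm_add_left, LinearPMap.boundaryForm_inclusion_left hB₀B, h2,
    zero_add, hu', LinearPMap.boundaryForm_add_right,
    LinearPMap.boundaryForm_inclusion_right hA₀A, h1, zero_add]

/-- Abstract integration-by-parts formula: if `A₀ ⊆ A` and `B₀ ⊆ B` are
densely defined restrictions of densely defined closed operators `A : dom(A) ⊆ H → K`,
`B : dom(B) ⊆ K → H` such that `⟪B U, u₀⟫ + ⟪U, A u₀⟫ = 0` for `U ∈ dom(B)`, `u₀ ∈ dom(A₀)`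
and `⟪B U₀, u⟫ + ⟪U₀, A u⟫ = 0` for `u ∈ dom(A)`, `U₀ ∈ dom(B₀)`, then for decompositions
`u = u₀ + u₁`, `U = U₀ + U₁` one has `⟪B U, u⟫ + ⟪U, A u⟫ = ⟪B U₁, u₁⟫ + ⟪U₁, A u₁⟫`. -/
theorem stmt6 {H K : Type*}
    [NormedAddCommGroup H] [InnerProductSpace ℂ H] [CompleteSpace H]
    [NormedAddCommGroup K] [InnerProductSpace ℂ K] [CompleteSpace K]
    (A A₀ : H →ₗ.[ℂ] K) (B B₀ : K →ₗ.[ℂ] H)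
    (hAdense : Dense (A.domain : Set H)) (hAclosed : A.IsClosed)
    (hBdense : Dense (B.domain : Set K)) (hBclosed : B.IsClosed)
    (hA₀dense : Dense (A₀.domain : Set H)) (hA₀A : A₀ ≤ A)
    (hB₀dense : Dense (B₀.domain : Set K)) (hB₀B : B₀ ≤ B)
    (h1 : ∀ (U : B.domain) (u₀ : A₀.domain),
      (inner ℂ (B U) (u₀ : H) : ℂ) + inner ℂ (U : K) (A₀ u₀) = 0)
    (h2 : ∀ (u : A.domain) (U₀ : B₀.domain),
      (inner ℂ (B₀ U₀) (u : H) : ℂ) + inner ℂ (U₀ : K) (A u) = 0)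
    (u u₁ : A.domain) (u₀ : A₀.domain) (hu : (u : H) = (u₀ : H) + (u₁ : H))
    (U U₁ : B.domain) (U₀ : B₀.domain) (hU : (U : K) = (U₀ : K) + (U₁ : K)) :
    (inner ℂ (B U) (u : H) : ℂ) + inner ℂ (U : K) (A u) =
      (inner ℂ (B U₁) (u₁ : H) : ℂ) + inner ℂ (U₁ : K) (A u₁) :=
  stmt6_general A A₀ B B₀ hA₀A hB₀B h1 h2 u u₁ u₀ hu U U₁ U₀ hU
end

section
/- Let H₁, H₂, H₃ be complex Hilbert spaces, β : H₁ → H₂, Q : H₂ → H₃, α : H₃ → H₃ bounded linear operators, and C : H₂ → H₂ a bounded skew-adjoint operator (C* = -C). Let ν > 0 and z ∈ ℂ with Re z ≥ ν, and define the bounded operator T(z) on H₁ ⊕ H₂ ⊕ H₃ by T(z)(x, y, w) := (x - β* y - β* Q* w, β x + y - C Q* w, Q β x - Q C y + w + z⁻¹·(α w)). Then for all (x, y, w) ∈ H₁ ⊕ H₂ ⊕ H₃: Re⟪(x, y, w), T(z)(x, y, w)⟫ = ‖x‖² + ‖y‖² + Re⟪w, w + z⁻¹·(α w)⟫ ≥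 (1 - ‖α‖/ν)·(‖x‖² + ‖y‖² + ‖w‖²). -/
/-!
The cross terms of `⟪(x, y, w), T(z)(x, y, w)⟫` come in pairs `⟪x, β* y⟫, ⟪y, β x⟫`,
`⟪x, β* Q* w⟫, ⟪w, Q β x⟫` and `⟪y, C Q* w⟫, ⟪w, Q C y⟫` which are, up to sign, complex
conjugates of each other (for the last pair because `C* = -C`), so their real parts cancel.
What is left is `‖x‖² + ‖y‖² + ‖w‖² + Re⟪w, z⁻¹ α w⟫`, and the last term is at least
`-‖α‖ ‖w‖² / ν` since `|z⁻¹| ≤ 1 / Re z ≤ 1 / ν`.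
-/

open ContinuousLinearMap RCLike

section CrossTerms

variable {𝕜 E F : Type*} [RCLike 𝕜]
  [NormedAddCommGroup E] [InnerProductSpace 𝕜 E] [CompleteSpace E]
  [NormedAddCommGroup F] [InnerProductSpace 𝕜 F] [CompleteSpace F]

theorem re_inner_adjoint_apply_right (A : E →L[𝕜] F) (x : E) (y : F) :
    re (inner 𝕜 x (adjoint A y)) = re (inner 𝕜 y (A x)) := by
  rw [adjoint_inner_right, ← inner_conj_symm, conj_re]

theorem re_inner_apply_of_adjoint_eq_neg {C : E →L[𝕜] E} (hC : adjoint C = -C) (x y : E) :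
    re (inner 𝕜 x (C y)) = -re (inner 𝕜 y (C x)) := by
  rw [← adjoint_inner_left, hC, neg_apply, inner_neg_left, map_neg, ← inner_conj_symm, conj_re]

end CrossTerms

section ResolventTerm

variable {E : Type*} [NormedAddCommGroup E] [InnerProductSpace ℂ E]

theorem norm_inv_le_inv_of_le_re {ν : ℝ} (hν : 0 < ν) {z : ℂ} (hz : ν ≤ z.re) :
    ‖z⁻¹‖ ≤ ν⁻¹ := by
  rw [norm_inv]
  exact inv_anti₀ hν (hz.trans (Complex.re_le_norm z))

theorem abs_re_inner_smul_apply_le (α : E →L[ℂ] E) (c : ℂ) (w : E) :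
    |(inner ℂ w (c • α w) : ℂ).re| ≤ ‖c‖ * ‖α‖ * ‖w‖ ^ 2 :=
  calc |(inner ℂ w (c • α w) : ℂ).re| ≤ ‖w‖ * ‖c • α w‖ :=
        (Complex.abs_re_le_norm _).trans (norm_inner_le_norm _ _)
    _ ≤ ‖w‖ * (‖c‖ * (‖α‖ * ‖w‖)) := by
        rw [norm_smul]; gcongr; exact α.le_opNorm w
    _ = ‖c‖ * ‖α‖ * ‖w‖ ^ 2 := by ring

theorem le_re_inner_add_inv_smul_apply (α : E →L[ℂ] E) {ν : ℝ} (hν : 0 < ν) {z : ℂ}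
    (hz : ν ≤ z.re) (w : E) :
    (1 - ‖α‖ / ν) * ‖w‖ ^ 2 ≤ (inner ℂ w (w + z⁻¹ • α w) : ℂ).re := by
  have hbound := abs_re_inner_smul_apply_le α z⁻¹ w
  have hz' : ‖z⁻¹‖ * ‖α‖ * ‖w‖ ^ 2 ≤ ‖α‖ / ν * ‖w‖ ^ 2 := by
    rw [div_eq_inv_mul]; gcongr; exact norm_inv_le_inv_of_le_re hν hz
  rw [inner_add_right, Complex.add_re, ← re_to_complex, inner_self_eq_norm_sq]
  linarith [neg_abs_le (inner ℂ w (z⁻¹ • α w) : ℂ).re]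

end ResolventTerm

section Impedance

variable {H₁ H₂ H₃ : Type*}
  [NormedAddCommGroup H₁] [InnerProductSpace ℂ H₁] [CompleteSpace H₁]
  [NormedAddCommGroup H₂] [InnerProductSpace ℂ H₂] [CompleteSpace H₂]
  [NormedAddCommGroup H₃] [InnerProductSpace ℂ H₃] [CompleteSpace H₃]

theorem re_inner_impedanceBlock_eq (β : H₁ →L[ℂ] H₂) (Q : H₂ →L[ℂ] H₃) (α : H₃ →L[ℂ] H₃)
    {C : H₂ →L[ℂ] H₂} (hC : adjoint C = -C) (z : ℂ) (x : H₁) (y : H₂) (w : H₃) :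
    ((inner ℂ x (x - adjoint β y - adjoint β (adjoint Q w)) : ℂ)
        + inner ℂ y (β x + y - C (adjoint Q w))
        + inner ℂ w (Q (β x) - Q (C y) + w + z⁻¹ • α w)).re
      = ‖x‖ ^ 2 + ‖y‖ ^ 2 + (inner ℂ w (w + z⁻¹ • α w) : ℂ).re := by
  have hxy := re_inner_adjoint_apply_right β x y
  have hxw : re (inner ℂ x (adjoint β (adjoint Q w))) = re (inner ℂ w (Q (β x))) := by
    rw [re_inner_adjoint_apply_right, adjoint_inner_left]
  have hyw : re (inner ℂ y (C (adjoint Q w))) = -re (inner ℂ w (Q (C y))) := by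
    rw [re_inner_apply_of_adjoint_eq_neg hC, adjoint_inner_left]
  rw [← inner_self_eq_norm_sq (𝕜 := ℂ) x, ← inner_self_eq_norm_sq (𝕜 := ℂ) y]
  simp only [re_to_complex] at hxy hxw hyw ⊢
  simp only [inner_sub_right, inner_add_right, Complex.add_re, Complex.sub_re]
  linarith

end Impedance

/-- For the block impedance operator
`T(z)(x, y, w) = (x - β* y - β* Q* w, β x + y - C Q* w, Q β x - Q C y + w + z⁻¹ • α w)`
on `H₁ ⊕ H₂ ⊕ H₃` (direct sum inner product), with `C` skew-adjoint, `ν > 0` and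
`Re z ≥ ν`, one has
`Re⟪(x,y,w), T(z)(x,y,w)⟫ = ‖x‖² + ‖y‖² + Re⟪w, w + z⁻¹ α w⟫ ≥ (1 - ‖α‖/ν)(‖x‖² + ‖y‖² + ‖w‖²)`. -/
theorem stmt10 {H₁ H₂ H₃ : Type*}
    [NormedAddCommGroup H₁] [InnerProductSpace ℂ H₁] [CompleteSpace H₁]
    [NormedAddCommGroup H₂] [InnerProductSpace ℂ H₂] [CompleteSpace H₂]
    [NormedAddCommGroup H₃] [InnerProductSpace ℂ H₃] [CompleteSpace H₃]
    (β : H₁ →L[ℂ] H₂) (Q : H₂ →L[ℂ] H₃) (α : H₃ →L[ℂ] H₃) (C : H₂ →L[ℂ] H₂)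
    (hC : ContinuousLinearMap.adjoint C = -C)
    (ν : ℝ) (hν : 0 < ν) (z : ℂ) (hz : ν ≤ z.re) :
    ∀ (x : H₁) (y : H₂) (w : H₃),
      ((inner ℂ x (x - (ContinuousLinearMap.adjoint β) y
            - (ContinuousLinearMap.adjoint β) ((ContinuousLinearMap.adjoint Q) w)) : ℂ)
        + inner ℂ y (β x + y - C ((ContinuousLinearMap.adjoint Q) w))
        + inner ℂ w (Q (β x) - Q (C y) + w + z⁻¹ • α w)).re
        = ‖x‖ ^ 2 + ‖y‖ ^ 2 + (inner ℂ w (w + z⁻¹ • α w) : ℂ).re ∧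
      (1 - ‖α‖ / ν) * (‖x‖ ^ 2 + ‖y‖ ^ 2 + ‖w‖ ^ 2) ≤
        ((inner ℂ x (x - (ContinuousLinearMap.adjoint β) y
            - (ContinuousLinearMap.adjoint β) ((ContinuousLinearMap.adjoint Q) w)) : ℂ)
        + inner ℂ y (β x + y - C ((ContinuousLinearMap.adjoint Q) w))
        + inner ℂ w (Q (β x) - Q (C y) + w + z⁻¹ • α w)).re := by
  intro x y w
  have hidentity := re_inner_impedanceBlock_eq β Q α hC z x y w
  refine ⟨hidentity, ?_⟩
  have hw := le_re_inner_add_inv_smul_apply α hν hz w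
  have hratio : 0 ≤ ‖α‖ / ν := by positivity
  rw [hidentity]
  nlinarith [sq_nonneg ‖x‖, sq_nonneg ‖y‖]
end

section
/- Let H₁, H₂ be complex Hilbert spaces, A : H₁ → H₁ a bounded selfadjoint operator with ⟪x, A x⟫ ≥ c₀‖x‖² for all x ∈ H₁ and some c₀ > 0 (so A is boundedly invertible), B : H₂ → H₁ a bounded operator, and D : H₂ → H₂ a bounded operator such that Re⟪y, (D - B* A⁻¹ B) y⟫ ≥ c₁‖y‖² for all y ∈ H₂ and some c₁ > 0. Then there exists c > 0 such that the block operator M on H₁ ⊕ H₂ given by M(x, y) := (A x + B y, B* x + D y) satisfies Re⟪(x, y), M(x, y)⟫ ≥ c·(‖x‖² + ‖y‖²) for all (x, y) ∈ H₁ ⊕ H₂. -/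
/-!
Put `z := x + A⁻¹ B y`. Because `A` is selfadjoint, completing the square gives the exact identity
`⟪(x, y), M (x, y)⟫ = ⟪z, A z⟫ + ⟪y, (D - B* A⁻¹ B) y⟫` (the symmetric Gauss step), so the form is
bounded below by `c₀ ‖z‖² + c₁ ‖y‖²`. Since `x = z - A⁻¹ B y`, this in turn dominates a multiple of
`‖x‖² + ‖y‖²`.
-/

open scoped InnerProductSpace

theorem exists_pos_mul_sq_add_sq_le {𝕜 E F : Type*} [NontriviallyNormedField 𝕜]
    [SeminormedAddCommGroup E] [NormedSpace 𝕜 E] [SeminormedAddCommGroup F] [NormedSpace 𝕜 F]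
    (T : F →L[𝕜] E) {c₀ c₁ : ℝ} (hc₀ : 0 < c₀) (hc₁ : 0 < c₁) :
    ∃ c > 0, ∀ x y, c * (‖x‖ ^ 2 + ‖y‖ ^ 2) ≤ c₀ * ‖x + T y‖ ^ 2 + c₁ * ‖y‖ ^ 2 := by
  set K := ‖T‖
  have hK : 0 < 2 * K ^ 2 + 1 := by positivity
  refine ⟨min (c₀ / 2) (c₁ / (2 * K ^ 2 + 1)), by positivity, fun x y => ?_⟩
  set c := min (c₀ / 2) (c₁ / (2 * K ^ 2 + 1))
  have hcz : 2 * c ≤ c₀ := by linarith [min_le_left (c₀ / 2) (c₁ / (2 * K ^ 2 + 1))]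
  have hcy : c * (2 * K ^ 2 + 1) ≤ c₁ :=
    (le_div_iff₀ hK).mp (min_le_right (c₀ / 2) (c₁ / (2 * K ^ 2 + 1)))
  have hx : ‖x‖ ≤ ‖x + T y‖ + K * ‖y‖ :=
    calc ‖x‖ = ‖(x + T y) - T y‖ := by rw [add_sub_cancel_right]
      _ ≤ ‖x + T y‖ + ‖T y‖ := norm_sub_le _ _
      _ ≤ ‖x + T y‖ + K * ‖y‖ := by gcongr; exact T.le_opNorm y
  have hx2 : ‖x‖ ^ 2 ≤ 2 * ‖x + T y‖ ^ 2 + 2 * K ^ 2 * ‖y‖ ^ 2 := by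
    nlinarith [norm_nonneg x, sq_nonneg (‖x + T y‖ - K * ‖y‖)]
  have hc : 0 ≤ c := by positivity
  calc c * (‖x‖ ^ 2 + ‖y‖ ^ 2)
      ≤ 2 * c * ‖x + T y‖ ^ 2 + c * (2 * K ^ 2 + 1) * ‖y‖ ^ 2 := by nlinarith
    _ ≤ c₀ * ‖x + T y‖ ^ 2 + c₁ * ‖y‖ ^ 2 := by gcongr

theorem inner_block_eq_inner_add_inner_schur {𝕜 E F : Type*} [RCLike 𝕜]
    [NormedAddCommGroup E] [InnerProductSpace 𝕜 E] [CompleteSpace E]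
    [NormedAddCommGroup F] [InnerProductSpace 𝕜 F] [CompleteSpace F]
    {A : E →L[𝕜] E} (hA : IsSelfAdjoint A) {A' : E →L[𝕜] E} (hAA' : ∀ x, A (A' x) = x)
    (B : F →L[𝕜] E) (D : F →L[𝕜] F) (x : E) (y : F) :
    ⟪x, A x + B y⟫_𝕜 + ⟪y, B.adjoint x + D y⟫_𝕜 =
      ⟪x + A' (B y), A (x + A' (B y))⟫_𝕜 + ⟪y, D y - B.adjoint (A' (B y))⟫_𝕜 := by
  have hsymm : ∀ z, ⟪A' (B y), A z⟫_𝕜 = ⟪B y, z⟫_𝕜 := fun z => by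
    simpa only [ContinuousLinearMap.coe_coe, hAA'] using (hA.isSymmetric (A' (B y)) z).symm
  rw [inner_add_left x, hsymm]
  simp only [map_add, hAA', inner_add_right, inner_sub_right, B.adjoint_inner_right]
  ring

theorem stmt12_general {H₁ H₂ : Type*}
    [NormedAddCommGroup H₁] [InnerProductSpace ℂ H₁] [CompleteSpace H₁]
    [NormedAddCommGroup H₂] [InnerProductSpace ℂ H₂] [CompleteSpace H₂]
    (A : H₁ →L[ℂ] H₁) (hA : IsSelfAdjoint A)
    (c₀ : ℝ) (hc₀ : 0 < c₀) (hAcoer : ∀ x : H₁, c₀ * ‖x‖ ^ 2 ≤ (inner ℂ x (A x) : ℂ).re)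
    (A' : H₁ →L[ℂ] H₁) (hA'₁ : ∀ x, A (A' x) = x)
    (B : H₂ →L[ℂ] H₁) (D : H₂ →L[ℂ] H₂)
    (c₁ : ℝ) (hc₁ : 0 < c₁)
    (hSchur : ∀ y : H₂,
      c₁ * ‖y‖ ^ 2 ≤ (inner ℂ y (D y - (ContinuousLinearMap.adjoint B) (A' (B y))) : ℂ).re) :
    ∃ c > 0, ∀ (x : H₁) (y : H₂),
      c * (‖x‖ ^ 2 + ‖y‖ ^ 2) ≤
        (inner ℂ x (A x + B y) + inner ℂ y ((ContinuousLinearMap.adjoint B) x + D y) : ℂ).re := by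
  obtain ⟨c, hc, hcoer⟩ := exists_pos_mul_sq_add_sq_le (A'.comp B) hc₀ hc₁
  refine ⟨c, hc, fun x y => ?_⟩
  rw [inner_block_eq_inner_add_inner_schur hA hA'₁, Complex.add_re]
  calc c * (‖x‖ ^ 2 + ‖y‖ ^ 2) ≤ c₀ * ‖x + A' (B y)‖ ^ 2 + c₁ * ‖y‖ ^ 2 := hcoer x y
    _ ≤ _ := add_le_add (hAcoer _) (hSchur y)

/-- Schur-complement ("symmetric Gauss step") positivity for a
block operator `M(x, y) = (A x + B y, B* x + D y)` on `H₁ ⊕ H₂`. -/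
theorem stmt12 {H₁ H₂ : Type*}
    [NormedAddCommGroup H₁] [InnerProductSpace ℂ H₁] [CompleteSpace H₁]
    [NormedAddCommGroup H₂] [InnerProductSpace ℂ H₂] [CompleteSpace H₂]
    (A : H₁ →L[ℂ] H₁) (hA : IsSelfAdjoint A)
    (c₀ : ℝ) (hc₀ : 0 < c₀) (hAcoer : ∀ x : H₁, c₀ * ‖x‖ ^ 2 ≤ (inner ℂ x (A x) : ℂ).re)
    (A' : H₁ →L[ℂ] H₁) (hA'₁ : ∀ x, A (A' x) = x) (hA'₂ : ∀ x, A' (A x) = x)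
    (B : H₂ →L[ℂ] H₁) (D : H₂ →L[ℂ] H₂)
    (c₁ : ℝ) (hc₁ : 0 < c₁)
    (hSchur : ∀ y : H₂,
      c₁ * ‖y‖ ^ 2 ≤ (inner ℂ y (D y - (ContinuousLinearMap.adjoint B) (A' (B y))) : ℂ).re) :
    ∃ c > 0, ∀ (x : H₁) (y : H₂),
      c * (‖x‖ ^ 2 + ‖y‖ ^ 2) ≤
        (inner ℂ x (A x + B y) + inner ℂ y ((ContinuousLinearMap.adjoint B) x + D y) : ℂ).re :=
  stmt12_general A hA c₀ hc₀ hAcoer A' hA'₁ B D c₁ hc₁ hSchur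
end

section
/- Let H, G, H_θ be complex Hilbert spaces and let C : G → G, e : H → G, b : H_θ → G, p : H_θ → H, ε, μ, σ : H → H, γ₀ : H_θ → H_θ be bounded linear operators with C, ε, μ, γ₀ selfadjoint and ⟪T, C T⟫ ≥ c_C‖T‖² for some c_C > 0 (so C is boundedly invertible). Assume there are c₁, c₂, c₃ > 0 and ν > 0 such that: (a) ⟪h, (μ - e* C⁻¹ e) h⟫ ≥ c₁‖h‖² for all h ∈ H; (b) ⟪θ, m₅₅ θ⟫ ≥ c₂‖θ‖² for all θ ∈ H_θ, where m₅₅ := γ₀ - b* C⁻¹ e (μ - e* C⁻¹ e)⁻¹ e* C⁻¹ b; (c) Re⟪h, (ν·m₄₄ + σ) h⟫ ≥ c₃‖h‖² for all h ∈ H, where m₄₄ := ε + e* C⁻¹ e - (p + e* C⁻¹ b)* m₅₅⁻¹ (p + e* C⁻¹ b) (m₅₅ is selfadjoint and positive-definite, hence boundedly invertible). Then there exists c > 0 such that the block operator on H ⊕ H ⊕ H_θ given by ν·[[μ - e* C⁻¹ e, 0, -e* C⁻¹ b], [0, ε + e* C⁻¹ e, p + e* C⁻¹ b], [-b* C⁻¹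 e, (p + e* C⁻¹ b)*, γ₀]] + [[0,0,0],[0, σ, 0],[0,0,0]] has real part bounded below by c, i.e. the real part of its quadratic form is at least c times the squared norm. -/
/-!
Gauss elimination of the block form. With `A = μ - e*C⁻¹e`, `K = e*C⁻¹b`, `u = A⁻¹Kθ` and
`v = m₅₅⁻¹(p + K)*y`, completing the square twice gives
`Re Q(x, y, θ) = ν⟪x - u, A(x - u)⟫ + ν⟪θ + v, m₅₅(θ + v)⟫ + Re⟪y, (ν m₄₄ + σ)y⟫`,
and each term is coercive by (a), (b), (c). The substitution `(x, y, θ) ↦ (x - u, y, θ + v)` is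
triangular with bounded off-diagonal part, so it distorts `‖x‖² + ‖y‖² + ‖θ‖²` only by a constant.
-/

open ContinuousLinearMap RCLike

section
variable {𝕜 E F G : Type*} [RCLike 𝕜]
  [NormedAddCommGroup E] [InnerProductSpace 𝕜 E]
  [NormedAddCommGroup F] [InnerProductSpace 𝕜 F]
  [NormedAddCommGroup G] [InnerProductSpace 𝕜 G]

local notation "⟪" x ", " y "⟫" => inner 𝕜 x y

theorem norm_sq_le_of_eq_add_apply (L : F →L[𝕜] E) {x x' : E} {y : F} (h : x = x' + L y) :
    ‖x‖ ^ 2 ≤ 2 * ‖x'‖ ^ 2 + 2 * ‖L‖ ^ 2 * ‖y‖ ^ 2 := by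
  have hpar := parallelogram_law_with_norm 𝕜 x' (L y)
  have hLy : ‖L y‖ ^ 2 ≤ ‖L‖ ^ 2 * ‖y‖ ^ 2 := by
    rw [← mul_pow]; exact pow_le_pow_left₀ (norm_nonneg _) (L.le_opNorm y) 2
  rw [← h] at hpar
  linarith [sq_nonneg ‖x' - L y‖]

variable [CompleteSpace E] [CompleteSpace F] [CompleteSpace G]

theorem ContinuousLinearMap.isSelfAdjoint_of_rightInverse {A W : E →L[𝕜] E}
    (hA : IsSelfAdjoint A) (hW : Function.RightInverse W A) : IsSelfAdjoint W := by
  rw [isSelfAdjoint_iff_isSymmetric]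
  intro a c
  calc ⟪W a, c⟫ = ⟪W a, A (W c)⟫ := by rw [hW c]
    _ = ⟪A (W a), W c⟫ := (hA.isSymmetric _ _).symm
    _ = ⟪a, W c⟫ := by rw [hW a]

/-- Completing the square; the remainder is the form of the Schur correction `B† W B`. -/
theorem re_inner_add_two_mul_re_inner_eq {A W : E →L[𝕜] E} (hA : IsSelfAdjoint A)
    (hW : Function.RightInverse W A) (B : F →L[𝕜] E) (x : E) (y : F) :
    re ⟪x, A x⟫ + 2 * re ⟪x, B y⟫
      = re ⟪x + W (B y), A (x + W (B y))⟫ - re ⟪y, (adjoint B ∘L W ∘L B) y⟫ := by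
  have hcross : re ⟪W (B y), A x⟫ = re ⟪x, B y⟫ := by
    rw [← adjoint_inner_left, hA.adjoint_eq, hW, inner_re_symm]
  have hcorr : re ⟪y, (adjoint B ∘L W ∘L B) y⟫ = re ⟪W (B y), B y⟫ := by
    rw [comp_apply, comp_apply, adjoint_inner_right, inner_re_symm]
  rw [map_add, hW, inner_add_left, inner_add_right, inner_add_right]
  simp only [map_add]
  rw [hcross, hcorr]
  ring

theorem re_arrowBlockForm_eq {A W : E →L[𝕜] E} (hA : IsSelfAdjoint A)
    (hW : Function.RightInverse W A) (K : G →L[𝕜] E) {Γ V : G →L[𝕜] G} (hΓ : IsSelfAdjoint Γ)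
    (hV : Function.RightInverse V (Γ - adjoint K ∘L W ∘L K)) (P : G →L[𝕜] F) (D σ : F →L[𝕜] F)
    (ν : ℝ) (x : E) (y : F) (θ : G) :
    re (⟪x, (ν : 𝕜) • (A x - K θ)⟫ + ⟪y, (ν : 𝕜) • (D y + P θ) + σ y⟫
        + ⟪θ, (ν : 𝕜) • (-adjoint K x + adjoint P y + Γ θ)⟫)
      = ν * re ⟪x - W (K θ), A (x - W (K θ))⟫
        + ν * re ⟪θ + V (adjoint P y), (Γ - adjoint K ∘L W ∘L K) (θ + V (adjoint P y))⟫
        + re ⟪y, (ν : 𝕜) • (D y - P (V (adjoint P y))) + σ y⟫ := by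
  have hS : IsSelfAdjoint (Γ - adjoint K ∘L W ∘L K) :=
    hΓ.sub ((isSelfAdjoint_of_rightInverse hA hW).adjoint_conj K)
  have h1 := re_inner_add_two_mul_re_inner_eq hA hW (-K) x θ
  have h2 := re_inner_add_two_mul_re_inner_eq hS hV (adjoint P) θ y
  have hK : re ⟪θ, adjoint K x⟫ = re ⟪x, K θ⟫ := by rw [adjoint_inner_right, inner_re_symm]
  have hP : re ⟪y, P θ⟫ = re ⟪θ, adjoint P y⟫ := by rw [← adjoint_inner_left, inner_re_symm]
  have hSθ : re ⟪θ, (Γ - adjoint K ∘L W ∘L K) θ⟫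
      = re ⟪θ, Γ θ⟫ - re ⟪θ, (adjoint K ∘L W ∘L K) θ⟫ := by
    rw [sub_apply, inner_sub_right, map_sub]
  simp only [neg_apply, map_neg, neg_comp, comp_neg, neg_neg, ← sub_eq_add_neg, inner_neg_right,
    map_neg] at h1
  simp only [adjoint_adjoint, comp_apply] at h2
  set x' := x - W (K θ)
  set θ' := θ + V (adjoint P y)
  set S := Γ - adjoint K ∘L W ∘L K
  simp only [inner_add_right, inner_sub_right, inner_neg_right, inner_smul_right, map_add, map_sub,
    map_neg, re_ofReal_mul]
  rw [hK, hP]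
  linear_combination ν * h1 + ν * h2 - ν * hSθ

theorem exists_pos_mul_le_re_arrowBlockForm {A W : E →L[𝕜] E} (hA : IsSelfAdjoint A)
    (hW : Function.RightInverse W A) (K : G →L[𝕜] E) {Γ V : G →L[𝕜] G} (hΓ : IsSelfAdjoint Γ)
    (hV : Function.RightInverse V (Γ - adjoint K ∘L W ∘L K)) (P : G →L[𝕜] F) (D σ : F →L[𝕜] F)
    {ν c₁ c₂ c₃ : ℝ} (hν : 0 < ν) (hc₁ : 0 < c₁) (hc₂ : 0 < c₂) (hc₃ : 0 < c₃)
    (hA_ge : ∀ x, c₁ * ‖x‖ ^ 2 ≤ re ⟪x, A x⟫)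
    (hS_ge : ∀ θ, c₂ * ‖θ‖ ^ 2 ≤ re ⟪θ, (Γ - adjoint K ∘L W ∘L K) θ⟫)
    (hT_ge : ∀ y, c₃ * ‖y‖ ^ 2 ≤ re ⟪y, (ν : 𝕜) • (D y - P (V (adjoint P y))) + σ y⟫) :
    ∃ c > 0, ∀ (x : E) (y : F) (θ : G), c * (‖x‖ ^ 2 + ‖y‖ ^ 2 + ‖θ‖ ^ 2) ≤
      re (⟪x, (ν : 𝕜) • (A x - K θ)⟫ + ⟪y, (ν : 𝕜) • (D y + P θ) + σ y⟫
        + ⟪θ, (ν : 𝕜) • (-adjoint K x + adjoint P y + Γ θ)⟫) := by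
  set m := min (ν * c₁) (min (ν * c₂) c₃)
  set a := ‖W ∘L K‖ ^ 2
  set b := ‖V ∘L adjoint P‖ ^ 2
  have hm : 0 < m := lt_min (by positivity) (lt_min (by positivity) hc₃)
  have hD : 0 < 2 * (1 + 2 * a) * (1 + b) := by positivity
  refine ⟨m / (2 * (1 + 2 * a) * (1 + b)), by positivity, fun x y θ => ?_⟩
  rw [re_arrowBlockForm_eq hA hW K hΓ hV P D σ ν x y θ]
  set x' := x - W (K θ)
  set θ' := θ + V (adjoint P y)
  have hx : ‖x‖ ^ 2 ≤ 2 * ‖x'‖ ^ 2 + 2 * a * ‖θ‖ ^ 2 :=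
    norm_sq_le_of_eq_add_apply (W ∘L K) (by simp [x'])
  have hθ : ‖θ‖ ^ 2 ≤ 2 * ‖θ'‖ ^ 2 + 2 * b * ‖y‖ ^ 2 := by
    simpa only [norm_neg] using norm_sq_le_of_eq_add_apply (-(V ∘L adjoint P)) (by simp [θ'])
  have hsum : ‖x‖ ^ 2 + ‖y‖ ^ 2 + ‖θ‖ ^ 2
      ≤ 2 * (1 + 2 * a) * (1 + b) * (‖x'‖ ^ 2 + ‖y‖ ^ 2 + ‖θ'‖ ^ 2) := by
    have ha : 0 ≤ a := by positivity
    have hb : 0 ≤ b := by positivity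
    nlinarith [mul_le_mul_of_nonneg_left hθ (by positivity : (0 : ℝ) ≤ 1 + 2 * a),
      mul_nonneg ha hb, sq_nonneg ‖x'‖, sq_nonneg ‖y‖, sq_nonneg ‖θ'‖]
  calc m / (2 * (1 + 2 * a) * (1 + b)) * (‖x‖ ^ 2 + ‖y‖ ^ 2 + ‖θ‖ ^ 2)
      ≤ m * (‖x'‖ ^ 2 + ‖y‖ ^ 2 + ‖θ'‖ ^ 2) := by
        rw [div_mul_eq_mul_div, div_le_iff₀ hD, mul_assoc, mul_comm _ (2 * _ * _)]
        exact mul_le_mul_of_nonneg_left hsum hm.le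
    _ ≤ ν * (c₁ * ‖x'‖ ^ 2) + ν * (c₂ * ‖θ'‖ ^ 2) + c₃ * ‖y‖ ^ 2 := by
        have h₁ : m ≤ ν * c₁ := min_le_left _ _
        have h₂ : m ≤ ν * c₂ := (min_le_right _ _).trans (min_le_left _ _)
        have h₃ : m ≤ c₃ := (min_le_right _ _).trans (min_le_right _ _)
        linarith [mul_le_mul_of_nonneg_right h₁ (sq_nonneg ‖x'‖),
          mul_le_mul_of_nonneg_right h₂ (sq_nonneg ‖θ'‖),
          mul_le_mul_of_nonneg_right h₃ (sq_nonneg ‖y‖)]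
    _ ≤ _ := by
        gcongr
        exacts [hA_ge x', hS_ge θ', hT_ge y]
end

open ContinuousLinearMap in
theorem stmt13_general {H G Hθ : Type*}
    [NormedAddCommGroup H] [InnerProductSpace ℂ H] [CompleteSpace H]
    [NormedAddCommGroup G] [InnerProductSpace ℂ G] [CompleteSpace G]
    [NormedAddCommGroup Hθ] [InnerProductSpace ℂ Hθ] [CompleteSpace Hθ]
    (C : G →L[ℂ] G) (e : H →L[ℂ] G) (b : Hθ →L[ℂ] G) (p : Hθ →L[ℂ] H)
    (ε μ σ : H →L[ℂ] H) (γ₀ : Hθ →L[ℂ] Hθ)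
    (hCsa : IsSelfAdjoint C) (hμsa : IsSelfAdjoint μ)
    (hγ₀sa : IsSelfAdjoint γ₀)
    -- `C'` is the bounded inverse of `C`
    (C' : G →L[ℂ] G) (hC'₁ : ∀ x, C (C' x) = x)
    -- `W` is the bounded inverse of `μ - e* C⁻¹ e`
    (W : H →L[ℂ] H)
    (hW₁ : ∀ x, μ (W x) - (adjoint e) (C' (e (W x))) = x)
    -- `m₅₅'` is the bounded inverse of `m₅₅ = γ₀ - b* C⁻¹ e (μ - e* C⁻¹ e)⁻¹ e* C⁻¹ b`
    (m₅₅' : Hθ →L[ℂ] Hθ)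
    (hm₅₅'₁ : ∀ θ, γ₀ (m₅₅' θ)
      - (adjoint b) (C' (e (W ((adjoint e) (C' (b (m₅₅' θ))))))) = θ)
    (ν : ℝ) (hν : 0 < ν)
    (c₁ : ℝ) (hc₁ : 0 < c₁)
    -- (a) `μ - e* C⁻¹ e ≥ c₁`
    (ha : ∀ h : H, c₁ * ‖h‖ ^ 2 ≤ (inner ℂ h (μ h - (adjoint e) (C' (e h))) : ℂ).re)
    (c₂ : ℝ) (hc₂ : 0 < c₂)
    -- (b) `m₅₅ ≥ c₂`
    (hb : ∀ θ : Hθ, c₂ * ‖θ‖ ^ 2 ≤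
      (inner ℂ θ (γ₀ θ - (adjoint b) (C' (e (W ((adjoint e) (C' (b θ))))))) : ℂ).re)
    (c₃ : ℝ) (hc₃ : 0 < c₃)
    -- (c) `Re (ν m₄₄ + σ) ≥ c₃`, with
    -- `m₄₄ = ε + e* C⁻¹ e - (p + e* C⁻¹ b)* m₅₅⁻¹ (p + e* C⁻¹ b)`
    (hcc : ∀ h : H, c₃ * ‖h‖ ^ 2 ≤
      (inner ℂ h ((ν : ℂ) • (ε h + (adjoint e) (C' (e h))
          - (p + (adjoint e).comp (C'.comp b))
              (m₅₅' ((adjoint (p + (adjoint e).comp (C'.comp b))) h))) + σ h) : ℂ).re) :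
    ∃ c > 0, ∀ (x y : H) (θ : Hθ),
      c * (‖x‖ ^ 2 + ‖y‖ ^ 2 + ‖θ‖ ^ 2) ≤
        ((inner ℂ x ((ν : ℂ) • (μ x - (adjoint e) (C' (e x)) - (adjoint e) (C' (b θ)))) : ℂ)
          + inner ℂ y ((ν : ℂ) • (ε y + (adjoint e) (C' (e y))
              + ((p + (adjoint e).comp (C'.comp b)) θ)) + σ y)
          + inner ℂ θ ((ν : ℂ) • (-((adjoint b) (C' (e x)))
              + (adjoint (p + (adjoint e).comp (C'.comp b))) y + γ₀ θ))).re := by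
  have hC' : IsSelfAdjoint C' := isSelfAdjoint_of_rightInverse hCsa hC'₁
  set K := adjoint e ∘L C' ∘L b
  have hKadj : adjoint K = adjoint b ∘L C' ∘L e := by
    simp only [K, adjoint_comp, adjoint_adjoint, hC'.adjoint_eq, comp_assoc]
  obtain ⟨c, hc, hform⟩ := exists_pos_mul_le_re_arrowBlockForm
    (W := W) (hμsa.sub (hC'.adjoint_conj e)) hW₁ K hγ₀sa (V := m₅₅')
    (by rw [hKadj]; exact hm₅₅'₁) (p + K) (ε + adjoint e ∘L C' ∘L e) σ hν hc₁ hc₂ hc₃ ha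
    (by rw [hKadj]; exact hb) hcc
  rw [hKadj] at hform
  exact ⟨c, hc, hform⟩

open ContinuousLinearMap in
/-- Positive-definiteness of the permuted and Gauss-reduced
thermo-piezo-electromagnetic material block
`ν·[[μ - e*C⁻¹e, 0, -e*C⁻¹b], [0, ε + e*C⁻¹e, p + e*C⁻¹b], [-b*C⁻¹e, (p + e*C⁻¹b)*, γ₀]]
 + diag(0, σ, 0)` on `H ⊕ H ⊕ H_θ`, assuming positivity of the Schur complements
`m₅₅ = γ₀ - b*C⁻¹e(μ - e*C⁻¹e)⁻¹e*C⁻¹b` and `ν·m₄₄ + σ`.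
Here `C'` is the (given) bounded inverse of `C`, `W` that of `μ - e*C⁻¹e`, and
`m₅₅'` that of `m₅₅`. -/
theorem stmt13 {H G Hθ : Type*}
    [NormedAddCommGroup H] [InnerProductSpace ℂ H] [CompleteSpace H]
    [NormedAddCommGroup G] [InnerProductSpace ℂ G] [CompleteSpace G]
    [NormedAddCommGroup Hθ] [InnerProductSpace ℂ Hθ] [CompleteSpace Hθ]
    (C : G →L[ℂ] G) (e : H →L[ℂ] G) (b : Hθ →L[ℂ] G) (p : Hθ →L[ℂ] H)
    (ε μ σ : H →L[ℂ] H) (γ₀ : Hθ →L[ℂ] Hθ)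
    (hCsa : IsSelfAdjoint C) (hεsa : IsSelfAdjoint ε) (hμsa : IsSelfAdjoint μ)
    (hγ₀sa : IsSelfAdjoint γ₀)
    (cC : ℝ) (hcC : 0 < cC) (hCcoer : ∀ T : G, cC * ‖T‖ ^ 2 ≤ (inner ℂ T (C T) : ℂ).re)
    -- `C'` is the bounded inverse of `C`
    (C' : G →L[ℂ] G) (hC'₁ : ∀ x, C (C' x) = x) (hC'₂ : ∀ x, C' (C x) = x)
    -- `W` is the bounded inverse of `μ - e* C⁻¹ e`
    (W : H →L[ℂ] H)
    (hW₁ : ∀ x, μ (W x) - (adjoint e) (C' (e (W x))) = x)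
    (hW₂ : ∀ x, W (μ x - (adjoint e) (C' (e x))) = x)
    -- `m₅₅'` is the bounded inverse of `m₅₅ = γ₀ - b* C⁻¹ e (μ - e* C⁻¹ e)⁻¹ e* C⁻¹ b`
    (m₅₅' : Hθ →L[ℂ] Hθ)
    (hm₅₅'₁ : ∀ θ, γ₀ (m₅₅' θ)
      - (adjoint b) (C' (e (W ((adjoint e) (C' (b (m₅₅' θ))))))) = θ)
    (hm₅₅'₂ : ∀ θ, m₅₅' (γ₀ θ
      - (adjoint b) (C' (e (W ((adjoint e) (C' (b θ))))))) = θ)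
    (ν : ℝ) (hν : 0 < ν)
    (c₁ : ℝ) (hc₁ : 0 < c₁)
    -- (a) `μ - e* C⁻¹ e ≥ c₁`
    (ha : ∀ h : H, c₁ * ‖h‖ ^ 2 ≤ (inner ℂ h (μ h - (adjoint e) (C' (e h))) : ℂ).re)
    (c₂ : ℝ) (hc₂ : 0 < c₂)
    -- (b) `m₅₅ ≥ c₂`
    (hb : ∀ θ : Hθ, c₂ * ‖θ‖ ^ 2 ≤
      (inner ℂ θ (γ₀ θ - (adjoint b) (C' (e (W ((adjoint e) (C' (b θ))))))) : ℂ).re)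
    (c₃ : ℝ) (hc₃ : 0 < c₃)
    -- (c) `Re (ν m₄₄ + σ) ≥ c₃`, with
    -- `m₄₄ = ε + e* C⁻¹ e - (p + e* C⁻¹ b)* m₅₅⁻¹ (p + e* C⁻¹ b)`
    (hcc : ∀ h : H, c₃ * ‖h‖ ^ 2 ≤
      (inner ℂ h ((ν : ℂ) • (ε h + (adjoint e) (C' (e h))
          - (p + (adjoint e).comp (C'.comp b))
              (m₅₅' ((adjoint (p + (adjoint e).comp (C'.comp b))) h))) + σ h) : ℂ).re) :
    ∃ c > 0, ∀ (x y : H) (θ : Hθ),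
      c * (‖x‖ ^ 2 + ‖y‖ ^ 2 + ‖θ‖ ^ 2) ≤
        ((inner ℂ x ((ν : ℂ) • (μ x - (adjoint e) (C' (e x)) - (adjoint e) (C' (b θ)))) : ℂ)
          + inner ℂ y ((ν : ℂ) • (ε y + (adjoint e) (C' (e y))
              + ((p + (adjoint e).comp (C'.comp b)) θ)) + σ y)
          + inner ℂ θ ((ν : ℂ) • (-((adjoint b) (C' (e x)))
              + (adjoint (p + (adjoint e).comp (C'.comp b))) y + γ₀ θ))).re :=
  stmt13_general C e b p ε μ σ γ₀ hCsa hμsa hγ₀sa C' hC'₁ W hW₁ m₅₅' hm₅₅'₁ ν hν c₁ hc₁ ha c₂ hc₂ hb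
    c₃ hc₃ hcc
end

section
/- Let H₀, G, H, H_θ, H_q and B₁, B₂, B₃ be complex Hilbert spaces. Let ρ : H₀ → H₀ be bounded selfadjoint with ⟪v, ρ v⟫ ≥ c_ρ‖v‖² (c_ρ > 0); let C : G → G be bounded selfadjoint with ⟪T, C T⟫ ≥ c_C‖T‖² (c_C > 0); let e : H → G, b : H_θ → G, p : H_θ → H, ε, μ, σ : H → H, γ₀ : H_θ → H_θ be bounded with ε, μ, γ₀ selfadjoint; let κ₀, κ₁ : H_q → H_q be bounded with κ₁ selfadjoint and κ₀ bijective; let β : B₁ → B₂, Q : B₂ → B₃, α : B₃ → B₃ be bounded and C_b : B₂ → B₂ bounded skew-adjoint. Define m₅₅ := γ₀ - b* C⁻¹ e (μ - e* C⁻¹ e)⁻¹ e* C⁻¹ b and m₄₄ := ε + e* C⁻¹ e - (p + e* C⁻¹ b)* m₅₅⁻¹ (p + e* C⁻¹ b), and assume there exist ν₁ > ‖α‖ and c₁, c₂, c₃, c₄ > 0 such that ⟪h, (μ - e* C⁻¹ e) h⟫ ≥ c₁‖h‖², ⟪θ, m₅₅ θ⟫ ≥ c₂‖θ‖², and for all ν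 ≥ ν₁: Re⟪h, (ν m₄₄ + σ) h⟫ ≥ c₃‖h‖² and Re⟪q, (ν κ₁ + κ₀⁻¹) q⟫ ≥ c₄‖q‖². For z ∈ ℂ with Re z ≥ ν ≥ ν₁ let T(z) be the bounded operator on B₁ ⊕ B₂ ⊕ B₃ given by the block matrix [[1, -β*, -β* Q*],[β, 1, -C_b Q*],[Qβ, -Q C_b, 1 + z⁻¹ α]] (which is boundedly invertible since its real part is ≥ 1 - ‖α‖/ν > 0), and let 𝒦(z) := T(z)⁻¹. Let 𝒩' be the bounded selfadjoint operator on H ⊕ G ⊕ H ⊕ H_θ given by [[ε + e* C⁻¹ e, 0, 0, p + e* C⁻¹ b],[0, C⁻¹, C⁻¹ e, C⁻¹ b],[0, e* C⁻¹, μ, 0],[(p + e* C⁻¹ b)*, b* C⁻¹, 0, γ₀ + b* C⁻¹ b]] and ℳ' := diag(σ, 0, 0, 0). Then there exist ν₀ ≥ ν₁ and c > 0 such that for all ν ≥ ν₀ and all z ∈ ℂ with Re z ≥ ν, the bounded operator on H₀ ⊕ (H ⊕ G ⊕ H ⊕ H_θ) ⊕ (B₁ ⊕ B₂ ⊕ B₃)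 ⊕ H_q given by ν·diag(ρ, 𝒩', 0, κ₁) + diag(0, ℳ', 𝒦(z), κ₀⁻¹) satisfies Re⟪X, (ν·diag(ρ, 𝒩', 0, κ₁) + diag(0, ℳ', 𝒦(z), κ₀⁻¹)) X⟫ ≥ c‖X‖² for all X. -/
/-!
The form splits into four decoupled blocks. The `ρ`- and `κ`-blocks are coercive by hypothesis.

The middle block is Hermitian, and completing the square three times (Schur complements with
respect to `C⁻¹`, then `μ - e* C⁻¹ e`, then `m₅₅`) writes its quadratic form as
`⟪g, C⁻¹ g⟫ + ⟪h, (μ - e* C⁻¹ e) h⟫ + ⟪t, m₅₅ t⟫ + ⟪x₁, m₄₄ x₁⟫` in the variables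
`g = x_G + e x₃ + b x_θ`, `h = x₃ - (μ - e* C⁻¹ e)⁻¹ e* C⁻¹ b x_θ` and
`t = x_θ + m₅₅⁻¹ (p + e* C⁻¹ b)* x₁`.
After multiplying by a large `ν` each square is coercive, and the triangular change of variables
has a bounded inverse.

In the boundary block all off-diagonal entries of `T(z)` form a skew-adjoint operator, so
`Re T(z) ≥ 1 - ‖α‖ / ν₁`; since `‖T(z)‖` is also bounded uniformly in `z`, the inverse `𝒦(z)` is
uniformly coercive as well.
-/

open ContinuousLinearMap

theorem IsSelfAdjoint.of_mul_eq_one {R : Type*} [Monoid R] [StarMul R] {a b : R}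
    (ha : IsSelfAdjoint a) (h : a * b = 1) : IsSelfAdjoint b := by
  have hba : star b * a = 1 := by rw [← ha.star_eq, ← star_mul, h, star_one]
  calc star b = star b * (a * b) := by rw [h, mul_one]
    _ = b := by rw [← mul_assoc, hba, one_mul]

theorem sq_le_two_mul_add {u a v A B : ℝ} (hu : 0 ≤ u) (h : u ≤ a + v) (ha : a ^ 2 ≤ A)
    (hv : v ^ 2 ≤ B) : u ^ 2 ≤ 2 * (A + B) := by
  nlinarith [sq_nonneg (a - v)]

section Normed

variable {𝕜 E F : Type*} [NontriviallyNormedField 𝕜] [SeminormedAddCommGroup E]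
  [SeminormedAddCommGroup F] [NormedSpace 𝕜 E] [NormedSpace 𝕜 F]

theorem norm_add_sq_le_of_le {x y : E} {A B : ℝ} (hx : ‖x‖ ^ 2 ≤ A) (hy : ‖y‖ ^ 2 ≤ B) :
    ‖x + y‖ ^ 2 ≤ 2 * (A + B) :=
  sq_le_two_mul_add (norm_nonneg _) (norm_add_le x y) hx hy

theorem norm_sub_sq_le_of_le {x y : E} {A B : ℝ} (hx : ‖x‖ ^ 2 ≤ A) (hy : ‖y‖ ^ 2 ≤ B) :
    ‖x - y‖ ^ 2 ≤ 2 * (A + B) :=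
  sq_le_two_mul_add (norm_nonneg _) (norm_sub_le x y) hx hy

theorem ContinuousLinearMap.le_mul_of_opNorm_le (A : E →L[𝕜] F) {k s : ℝ} {v : E}
    (hA : ‖A‖ ≤ k) (hv : ‖v‖ ≤ s) : ‖A v‖ ≤ k * s :=
  (A.le_opNorm_of_le hv).trans (mul_le_mul_of_nonneg_right hA ((norm_nonneg v).trans hv))

theorem ContinuousLinearMap.norm_apply_sq_le (A : E →L[𝕜] F) {x : E} {s : ℝ}
    (hx : ‖x‖ ^ 2 ≤ s) : ‖A x‖ ^ 2 ≤ ‖A‖ ^ 2 * s := by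
  calc ‖A x‖ ^ 2 ≤ (‖A‖ * ‖x‖) ^ 2 := by gcongr; exact A.le_opNorm x
    _ ≤ ‖A‖ ^ 2 * s := by rw [mul_pow]; gcongr

end Normed

section WithLp

variable {E F G : Type*} [SeminormedAddCommGroup E] [SeminormedAddCommGroup F]
  [SeminormedAddCommGroup G]

theorem WithLp.prod_prod_norm_sq (u : WithLp 2 (E × WithLp 2 (F × G))) :
    ‖u‖ ^ 2 = ‖u.fst‖ ^ 2 + ‖u.snd.fst‖ ^ 2 + ‖u.snd.snd‖ ^ 2 := by
  rw [WithLp.prod_norm_sq_eq_of_L2, WithLp.prod_norm_sq_eq_of_L2, add_assoc]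

theorem WithLp.prod_prod_norm_sq_le_of_le {u : WithLp 2 (E × WithLp 2 (F × G))} {m : ℝ}
    (h₁ : ‖u.fst‖ ≤ m) (h₂ : ‖u.snd.fst‖ ≤ m) (h₃ : ‖u.snd.snd‖ ≤ m) : ‖u‖ ^ 2 ≤ 3 * m ^ 2 := by
  rw [WithLp.prod_prod_norm_sq]
  linarith [pow_le_pow_left₀ (norm_nonneg _) h₁ 2, pow_le_pow_left₀ (norm_nonneg _) h₂ 2,
    pow_le_pow_left₀ (norm_nonneg _) h₃ 2]

end WithLp

theorem exists_sum_norm_sq_le_triangular {𝕜 E₁ E₂ E₃ E₄ : Type*} [NontriviallyNormedField 𝕜]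
    [SeminormedAddCommGroup E₁] [SeminormedAddCommGroup E₂] [SeminormedAddCommGroup E₃]
    [SeminormedAddCommGroup E₄] [NormedSpace 𝕜 E₁] [NormedSpace 𝕜 E₂] [NormedSpace 𝕜 E₃]
    [NormedSpace 𝕜 E₄] {C C' : E₂ →L[𝕜] E₂} (hC : ∀ x, C (C' x) = x)
    (e : E₃ →L[𝕜] E₂) (b : E₄ →L[𝕜] E₂) (A₂ : E₄ →L[𝕜] E₃) (A₁ : E₁ →L[𝕜] E₄) :
    ∃ K > 0, ∀ x₁ x₂ x₃ x₄, ‖x₁‖ ^ 2 + ‖x₂‖ ^ 2 + ‖x₃‖ ^ 2 + ‖x₄‖ ^ 2 ≤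
      K * (‖x₁‖ ^ 2 + ‖C' (x₂ + e x₃ + b x₄)‖ ^ 2 + ‖x₃ - A₂ x₄‖ ^ 2 + ‖x₄ + A₁ x₁‖ ^ 2) := by
  set K₄ := 2 * (1 + ‖A₁‖ ^ 2) with hK₄
  set K₃ := 2 * (1 + ‖A₂‖ ^ 2 * K₄) with hK₃
  set K₂ := 2 * (‖C‖ ^ 2 + 2 * (‖e‖ ^ 2 * K₃ + ‖b‖ ^ 2 * K₄)) with hK₂
  refine ⟨1 + K₄ + K₃ + K₂, by rw [hK₂, hK₃, hK₄]; positivity, fun x₁ x₂ x₃ x₄ => ?_⟩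
  set g := C' (x₂ + e x₃ + b x₄)
  set s := ‖x₁‖ ^ 2 + ‖g‖ ^ 2 + ‖x₃ - A₂ x₄‖ ^ 2 + ‖x₄ + A₁ x₁‖ ^ 2
  obtain ⟨h₁, hg, hh, ht⟩ : ‖x₁‖ ^ 2 ≤ s ∧ ‖g‖ ^ 2 ≤ s ∧ ‖x₃ - A₂ x₄‖ ^ 2 ≤ s ∧
      ‖x₄ + A₁ x₁‖ ^ 2 ≤ s := by
    refine ⟨?_, ?_, ?_, ?_⟩ <;> linarith [sq_nonneg ‖x₁‖, sq_nonneg ‖g‖, sq_nonneg ‖x₃ - A₂ x₄‖,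
      sq_nonneg ‖x₄ + A₁ x₁‖]
  have h₄ : ‖x₄‖ ^ 2 ≤ K₄ * s := by
    calc ‖x₄‖ ^ 2 = ‖(x₄ + A₁ x₁) - A₁ x₁‖ ^ 2 := by rw [add_sub_cancel_right]
      _ ≤ 2 * (s + ‖A₁‖ ^ 2 * s) := norm_sub_sq_le_of_le ht (A₁.norm_apply_sq_le h₁)
      _ = K₄ * s := by rw [hK₄]; ring
  have h₃ : ‖x₃‖ ^ 2 ≤ K₃ * s := by
    calc ‖x₃‖ ^ 2 = ‖(x₃ - A₂ x₄) + A₂ x₄‖ ^ 2 := by rw [sub_add_cancel]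
      _ ≤ 2 * (s + ‖A₂‖ ^ 2 * (K₄ * s)) := norm_add_sq_le_of_le hh (A₂.norm_apply_sq_le h₄)
      _ = K₃ * s := by rw [hK₃]; ring
  have h₂ : ‖x₂‖ ^ 2 ≤ K₂ * s := by
    calc ‖x₂‖ ^ 2 = ‖C g - (e x₃ + b x₄)‖ ^ 2 := by rw [hC, add_assoc, add_sub_cancel_right]
      _ ≤ 2 * (‖C‖ ^ 2 * s + 2 * (‖e‖ ^ 2 * (K₃ * s) + ‖b‖ ^ 2 * (K₄ * s))) :=
          norm_sub_sq_le_of_le (C.norm_apply_sq_le hg)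
            (norm_add_sq_le_of_le (e.norm_apply_sq_le h₃) (b.norm_apply_sq_le h₄))
      _ = K₂ * s := by rw [hK₂]; ring
  linarith

theorem Complex.re_inner_comm {E : Type*} [NormedAddCommGroup E] [InnerProductSpace ℂ E]
    (x y : E) : (inner ℂ x y).re = (inner ℂ y x).re :=
  inner_re_symm (𝕜 := ℂ) x y

theorem Complex.re_inner_self {E : Type*} [NormedAddCommGroup E] [InnerProductSpace ℂ E]
    (x : E) : (inner ℂ x x).re = ‖x‖ ^ 2 :=
  inner_self_eq_norm_sq (𝕜 := ℂ) x

theorem Complex.re_inner_ofReal_smul {E : Type*} [NormedAddCommGroup E] [InnerProductSpace ℂ E]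
    (x y : E) (t : ℝ) : (inner ℂ x ((t : ℂ) • y)).re = t * (inner ℂ x y).re := by
  rw [inner_smul_right, Complex.re_ofReal_mul]

theorem Complex.neg_mul_norm_sq_le_re_inner_smul_apply {E : Type*} [NormedAddCommGroup E]
    [InnerProductSpace ℂ E] (A : E →L[ℂ] E) (c : ℂ) (w : E) :
    -(‖c‖ * ‖A‖ * ‖w‖ ^ 2) ≤ (inner ℂ w (c • A w)).re := by
  rw [neg_le]
  calc -(inner ℂ w (c • A w)).re ≤ ‖inner ℂ w (c • A w)‖ :=
        (neg_le_abs _).trans (Complex.abs_re_le_norm _)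
    _ ≤ ‖w‖ * (‖c‖ * (‖A‖ * ‖w‖)) := by
        refine (norm_inner_le_norm _ _).trans ?_
        rw [norm_smul]
        gcongr
        exact A.le_opNorm w
    _ = ‖c‖ * ‖A‖ * ‖w‖ ^ 2 := by ring

theorem le_re_inner_of_rightInverse {𝕜 E : Type*} [RCLike 𝕜] [NormedAddCommGroup E]
    [InnerProductSpace 𝕜 E] {T K : E → E} {δ M : ℝ} (hδ : 0 ≤ δ) (hM : 0 < M)
    (hTK : ∀ v, T (K v) = v) (hT : ∀ u, δ * ‖u‖ ^ 2 ≤ RCLike.re (inner 𝕜 u (T u)))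
    (hTM : ∀ u, ‖T u‖ ^ 2 ≤ M * ‖u‖ ^ 2) (v : E) :
    δ / M * ‖v‖ ^ 2 ≤ RCLike.re (inner 𝕜 v (K v)) := by
  calc δ / M * ‖v‖ ^ 2 = δ / M * ‖T (K v)‖ ^ 2 := by rw [hTK]
    _ ≤ δ / M * (M * ‖K v‖ ^ 2) := by gcongr; exact hTM _
    _ = δ * ‖K v‖ ^ 2 := by field_simp
    _ ≤ RCLike.re (inner 𝕜 (K v) (T (K v))) := hT _
    _ = RCLike.re (inner 𝕜 v (K v)) := by rw [inner_re_symm, hTK]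

section SelfAdjoint

variable {𝕜 E : Type*} [RCLike 𝕜] [NormedAddCommGroup E] [InnerProductSpace 𝕜 E]
  [CompleteSpace E] {A : E →L[𝕜] E}

theorem IsSelfAdjoint.of_rightInverse {A' : E →L[𝕜] E} (hA : IsSelfAdjoint A)
    (h : ∀ x, A (A' x) = x) : IsSelfAdjoint A' :=
  hA.of_mul_eq_one (ContinuousLinearMap.ext h)

theorem IsSelfAdjoint.inner_map_left (hA : IsSelfAdjoint A) (x y : E) :
    inner 𝕜 (A x) y = inner 𝕜 x (A y) := by
  rw [← adjoint_inner_left, hA.adjoint_eq]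

theorem IsSelfAdjoint.inner_add_map_add (hA : IsSelfAdjoint A) (x v : E) :
    inner 𝕜 (x + v) (A (x + v)) =
      inner 𝕜 x (A x) + inner 𝕜 x (A v) + inner 𝕜 (A v) x + inner 𝕜 v (A v) := by
  rw [map_add, inner_add_left, inner_add_right, inner_add_right, hA.inner_map_left v x]
  ring

end SelfAdjoint

section Impedance

variable {B₁ B₂ B₃ : Type*}
  [NormedAddCommGroup B₁] [InnerProductSpace ℂ B₁] [CompleteSpace B₁]
  [NormedAddCommGroup B₂] [InnerProductSpace ℂ B₂] [CompleteSpace B₂]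
  [NormedAddCommGroup B₃] [InnerProductSpace ℂ B₃] [CompleteSpace B₃]
  (β : B₁ →L[ℂ] B₂) (Q : B₂ →L[ℂ] B₃) (α : B₃ →L[ℂ] B₃) (C_b : B₂ →L[ℂ] B₂)

local notation "𝔹" => WithLp 2 (B₁ × WithLp 2 (B₂ × B₃))

def IsImpedanceBlock (z : ℂ) (T : 𝔹 → 𝔹) : Prop :=
  ∀ (x : B₁) (y : B₂) (w : B₃),
    T ((WithLp.equiv 2 (B₁ × WithLp 2 (B₂ × B₃))).symm
        (x, (WithLp.equiv 2 (B₂ × B₃)).symm (y, w))) =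
      (WithLp.equiv 2 (B₁ × WithLp 2 (B₂ × B₃))).symm
        (x - (adjoint β) y - (adjoint β) ((adjoint Q) w),
          (WithLp.equiv 2 (B₂ × B₃)).symm
            (β x + y - C_b ((adjoint Q) w), Q (β x) - Q (C_b y) + w + z⁻¹ • α w))

variable {β Q α C_b}

theorem IsImpedanceBlock.apply {z : ℂ} {T : 𝔹 → 𝔹} (hT : IsImpedanceBlock β Q α C_b z T) (u : 𝔹) :
    T u = (WithLp.equiv 2 (B₁ × WithLp 2 (B₂ × B₃))).symm
        (u.fst - (adjoint β) u.snd.fst - (adjoint β) ((adjoint Q) u.snd.snd),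
          (WithLp.equiv 2 (B₂ × B₃)).symm
            (β u.fst + u.snd.fst - C_b ((adjoint Q) u.snd.snd),
              Q (β u.fst) - Q (C_b u.snd.fst) + u.snd.snd + z⁻¹ • α u.snd.snd)) :=
  hT u.fst u.snd.fst u.snd.snd

/-- The off-diagonal part of the impedance block is skew-adjoint. -/
theorem IsImpedanceBlock.re_inner_self_apply (hCb : adjoint C_b = -C_b) {z : ℂ} {T : 𝔹 → 𝔹}
    (hT : IsImpedanceBlock β Q α C_b z T) (u : 𝔹) :
    (inner ℂ u (T u)).re = ‖u‖ ^ 2 + (inner ℂ u.snd.snd (z⁻¹ • α u.snd.snd)).re := by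
  have hβ : (inner ℂ u.fst (adjoint β u.snd.fst)).re = (inner ℂ u.snd.fst (β u.fst)).re := by
    rw [adjoint_inner_right]; exact Complex.re_inner_comm _ _
  have hQβ : (inner ℂ u.fst (adjoint β (adjoint Q u.snd.snd))).re
      = (inner ℂ u.snd.snd (Q (β u.fst))).re := by
    rw [adjoint_inner_right, adjoint_inner_right]; exact Complex.re_inner_comm _ _
  have hQC : (inner ℂ u.snd.snd (Q (C_b u.snd.fst))).re
      = -(inner ℂ u.snd.fst (C_b (adjoint Q u.snd.snd))).re := by
    rw [← adjoint_inner_left Q, ← adjoint_inner_left C_b, hCb, neg_apply, inner_neg_left,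
      Complex.neg_re, neg_inj]
    exact Complex.re_inner_comm _ _
  rw [hT.apply, WithLp.prod_prod_norm_sq]
  simp only [WithLp.prod_inner_apply, WithLp.equiv_symm_apply, WithLp.ofLp_fst, WithLp.ofLp_snd,
    inner_add_right, inner_sub_right, Complex.add_re, Complex.sub_re, Complex.re_inner_self]
  linarith

theorem IsImpedanceBlock.norm_apply_sq_le {z : ℂ} {T : 𝔹 → 𝔹}
    (hT : IsImpedanceBlock β Q α C_b z T) (hz : ‖z⁻¹‖ * ‖α‖ ≤ 1) (u : 𝔹) :
    ‖T u‖ ^ 2 ≤ 48 * (1 + ‖β‖ + ‖Q‖ + ‖C_b‖) ^ 4 * ‖u‖ ^ 2 := by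
  set k := 1 + ‖β‖ + ‖Q‖ + ‖C_b‖ with hk_def
  set r := ‖u‖
  have hr : 0 ≤ r := norm_nonneg u
  obtain ⟨hk, hβ, hQ, hC⟩ : 1 ≤ k ∧ ‖β‖ ≤ k ∧ ‖Q‖ ≤ k ∧ ‖C_b‖ ≤ k := by
    refine ⟨?_, ?_, ?_, ?_⟩ <;> linarith [norm_nonneg β, norm_nonneg Q, norm_nonneg C_b]
  have hβ' : ‖adjoint β‖ ≤ k := by rwa [LinearIsometryEquiv.norm_map]
  have hQ' : ‖adjoint Q‖ ≤ k := by rwa [LinearIsometryEquiv.norm_map]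
  have hx : ‖u.fst‖ ≤ r := WithLp.norm_fst_le _ u
  have hy : ‖u.snd.fst‖ ≤ r := (WithLp.norm_fst_le _ _).trans (WithLp.norm_snd_le _ u)
  have hw : ‖u.snd.snd‖ ≤ r := (WithLp.norm_snd_le _ _).trans (WithLp.norm_snd_le _ u)
  have hαw : ‖z⁻¹ • α u.snd.snd‖ ≤ r :=
    calc ‖z⁻¹ • α u.snd.snd‖ ≤ ‖z⁻¹‖ * (‖α‖ * r) := by
          rw [norm_smul]; gcongr; exact α.le_opNorm_of_le hw
      _ ≤ r := by rw [← mul_assoc]; exact mul_le_of_le_one_left hr hz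
  have hkr : r ≤ k * r := le_mul_of_one_le_left hr hk
  have hkkr : k * r ≤ k * (k * r) := le_mul_of_one_le_left (by positivity) hk
  have hX : ‖u.fst - adjoint β u.snd.fst - adjoint β (adjoint Q u.snd.snd)‖ ≤ 4 * k ^ 2 * r := by
    have h1 := le_mul_of_opNorm_le _ hβ' hy
    have h2 := le_mul_of_opNorm_le _ hβ' (le_mul_of_opNorm_le _ hQ' hw)
    have := norm_sub_le (u.fst - adjoint β u.snd.fst) (adjoint β (adjoint Q u.snd.snd))
    have := norm_sub_le u.fst (adjoint β u.snd.fst)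
    linarith
  have hY : ‖β u.fst + u.snd.fst - C_b (adjoint Q u.snd.snd)‖ ≤ 4 * k ^ 2 * r := by
    have h1 := le_mul_of_opNorm_le _ hβ hx
    have h2 := le_mul_of_opNorm_le _ hC (le_mul_of_opNorm_le _ hQ' hw)
    have := norm_sub_le (β u.fst + u.snd.fst) (C_b (adjoint Q u.snd.snd))
    have := norm_add_le (β u.fst) u.snd.fst
    linarith
  have hZ : ‖Q (β u.fst) - Q (C_b u.snd.fst) + u.snd.snd + z⁻¹ • α u.snd.snd‖
      ≤ 4 * k ^ 2 * r := by
    have h1 := le_mul_of_opNorm_le _ hQ (le_mul_of_opNorm_le _ hβ hx)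
    have h2 := le_mul_of_opNorm_le _ hQ (le_mul_of_opNorm_le _ hC hy)
    have := norm_add_le (Q (β u.fst) - Q (C_b u.snd.fst) + u.snd.snd) (z⁻¹ • α u.snd.snd)
    have := norm_add_le (Q (β u.fst) - Q (C_b u.snd.fst)) u.snd.snd
    have := norm_sub_le (Q (β u.fst)) (Q (C_b u.snd.fst))
    linarith
  rw [hT.apply]
  calc _ ≤ 3 * (4 * k ^ 2 * r) ^ 2 := WithLp.prod_prod_norm_sq_le_of_le hX hY hZ
    _ = 48 * k ^ 4 * r ^ 2 := by ring

theorem impedance_inverse_coercive (hCb : adjoint C_b = -C_b) {ν₁ : ℝ} (hν₁ : ‖α‖ < ν₁) :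
    ∃ c > 0, ∀ z : ℂ, ν₁ ≤ z.re → ∀ T K : 𝔹 → 𝔹, IsImpedanceBlock β Q α C_b z T →
      (∀ v, T (K v) = v) → ∀ v, c * ‖v‖ ^ 2 ≤ (inner ℂ v (K v)).re := by
  have hν₁0 : 0 < ν₁ := (norm_nonneg α).trans_lt hν₁
  have hδ : 0 < 1 - ‖α‖ / ν₁ := by rw [sub_pos, div_lt_one hν₁0]; exact hν₁
  set M := 48 * (1 + ‖β‖ + ‖Q‖ + ‖C_b‖) ^ 4
  refine ⟨(1 - ‖α‖ / ν₁) / M, by positivity, fun z hz T K hT hTK => ?_⟩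
  have hzα : ‖z⁻¹‖ * ‖α‖ ≤ ‖α‖ / ν₁ := by
    rw [norm_inv, inv_mul_eq_div]
    gcongr
    exact hz.trans (Complex.re_le_norm z)
  refine le_re_inner_of_rightInverse (𝕜 := ℂ) hδ.le (by positivity) hTK ?_ ?_
  · intro u
    have hw : ‖u.snd.snd‖ ^ 2 ≤ ‖u‖ ^ 2 := by
      rw [WithLp.prod_prod_norm_sq]; linarith [sq_nonneg ‖u.fst‖, sq_nonneg ‖u.snd.fst‖]
    have hα := Complex.neg_mul_norm_sq_le_re_inner_smul_apply α z⁻¹ u.snd.snd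
    show _ ≤ (inner ℂ u (T u)).re
    rw [hT.re_inner_self_apply hCb]
    nlinarith [mul_le_mul_of_nonneg_left hw (by positivity : 0 ≤ ‖α‖ / ν₁)]
  · exact hT.norm_apply_sq_le (hzα.trans ((div_le_one hν₁0).mpr hν₁.le))

end Impedance

section MiddleBlock

variable {G H Hθ : Type*}
  [NormedAddCommGroup G] [InnerProductSpace ℂ G] [CompleteSpace G]
  [NormedAddCommGroup H] [InnerProductSpace ℂ H] [CompleteSpace H]
  [NormedAddCommGroup Hθ] [InnerProductSpace ℂ Hθ] [CompleteSpace Hθ]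
  (C' : G →L[ℂ] G) (e : H →L[ℂ] G) (b : Hθ →L[ℂ] G) (S : Hθ →L[ℂ] H)
  (ε μ : H →L[ℂ] H) (γ₀ : Hθ →L[ℂ] Hθ) (W : H →L[ℂ] H) (m₅₅' : Hθ →L[ℂ] Hθ)

noncomputable def schurμ : H →L[ℂ] H := μ - (adjoint e).comp (C'.comp e)

noncomputable def m₅₅ : Hθ →L[ℂ] Hθ :=
  γ₀ - (adjoint b).comp (C'.comp (e.comp (W.comp ((adjoint e).comp (C'.comp b)))))

noncomputable def m₄₄ : H →L[ℂ] H :=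
  ε + (adjoint e).comp (C'.comp e) - S.comp (m₅₅'.comp (adjoint S))

variable {C' e b μ γ₀ W}

theorem isSelfAdjoint_schurμ (hC' : IsSelfAdjoint C') (hμ : IsSelfAdjoint μ) :
    IsSelfAdjoint (schurμ C' e μ) :=
  hμ.sub (hC'.adjoint_conj e)

theorem isSelfAdjoint_m₅₅ (hC' : IsSelfAdjoint C') (hγ₀ : IsSelfAdjoint γ₀)
    (hW : IsSelfAdjoint W) : IsSelfAdjoint (m₅₅ C' e b γ₀ W) := by
  have h := hW.adjoint_conj ((adjoint e).comp (C'.comp b))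
  simp only [adjoint_comp, adjoint_adjoint, hC'.adjoint_eq, comp_assoc] at h
  exact hγ₀.sub h

theorem inner_middle_eq (hC' : IsSelfAdjoint C') (hμ : IsSelfAdjoint μ) (hγ₀ : IsSelfAdjoint γ₀)
    (hW : ∀ x, schurμ C' e μ (W x) = x) (hm : ∀ θ, m₅₅ C' e b γ₀ W (m₅₅' θ) = θ)
    (x₁ : H) (xG : G) (x₃ : H) (xθ : Hθ) :
    inner ℂ x₁ (ε x₁ + adjoint e (C' (e x₁)) + S xθ)
      + inner ℂ xG (C' xG + C' (e x₃) + C' (b xθ))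
      + inner ℂ x₃ (adjoint e (C' xG) + μ x₃)
      + inner ℂ xθ (adjoint S x₁ + adjoint b (C' xG) + γ₀ xθ
          + adjoint b (C' (b xθ))) =
    inner ℂ (xG + e x₃ + b xθ) (C' (xG + e x₃ + b xθ))
      + inner ℂ (x₃ - W (adjoint e (C' (b xθ)))) (schurμ C' e μ (x₃ - W (adjoint e (C' (b xθ)))))
      + inner ℂ (xθ + m₅₅' (adjoint S x₁))
          (m₅₅ C' e b γ₀ W (xθ + m₅₅' (adjoint S x₁)))
      + inner ℂ x₁ (m₄₄ C' e S ε m₅₅' x₁) := by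
  have hM := isSelfAdjoint_schurμ (e := e) hC' hμ
  have hW' := hM.of_rightInverse hW
  have h5 := isSelfAdjoint_m₅₅ (e := e) (b := b) hC' hγ₀ hW'
  have h5' := h5.of_rightInverse hm
  set u := adjoint e (C' (b xθ))
  set s := adjoint S x₁
  have hh := hM.inner_add_map_add x₃ (-W u)
  have ht := h5.inner_add_map_add xθ (m₅₅' s)
  rw [map_neg, hW] at hh
  rw [hm] at ht
  rw [sub_eq_add_neg x₃, hh, ht]
  simp only [schurμ, m₅₅, m₄₄, sub_apply, add_apply, comp_apply, map_add, inner_add_left,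
    inner_add_right, inner_sub_right, inner_neg_left, inner_neg_right]
  have f1 : inner ℂ (e x₃) (C' xG) = inner ℂ x₃ (adjoint e (C' xG)) :=
    (adjoint_inner_right _ _ _).symm
  have f2 : inner ℂ (b xθ) (C' xG) = inner ℂ xθ (adjoint b (C' xG)) :=
    (adjoint_inner_right _ _ _).symm
  have f3 : inner ℂ (e x₃) (C' (e x₃)) = inner ℂ x₃ (adjoint e (C' (e x₃))) :=
    (adjoint_inner_right _ _ _).symm
  have f4 : inner ℂ (b xθ) (C' (b xθ)) = inner ℂ xθ (adjoint b (C' (b xθ))) :=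
    (adjoint_inner_right _ _ _).symm
  have f5 : inner ℂ (e x₃) (C' (b xθ)) = inner ℂ x₃ u := (adjoint_inner_right _ _ _).symm
  have f6 : inner ℂ (b xθ) (C' (e x₃)) = inner ℂ u x₃ := by
    rw [adjoint_inner_left, hC'.inner_map_left]
  have f7 : inner ℂ xθ (adjoint b (C' (e (W u)))) = inner ℂ (W u) u := by
    rw [adjoint_inner_right, ← hC'.inner_map_left, ← adjoint_inner_left, hW'.inner_map_left]
  have f8 : inner ℂ s xθ = inner ℂ x₁ (S xθ) := adjoint_inner_left _ _ _
  have f9 : inner ℂ x₁ (S (m₅₅' s)) = inner ℂ (m₅₅' s) s := by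
    rw [← adjoint_inner_left, h5'.inner_map_left]
  linear_combination f7 + f9 - f1 - f2 - f3 - f4 - f5 - f6 - f8

theorem middle_block_coercive {C : G →L[ℂ] G} (hC : IsSelfAdjoint C) {cC : ℝ} (hcC : 0 < cC)
    (hCcoer : ∀ T, cC * ‖T‖ ^ 2 ≤ (inner ℂ T (C T)).re) (hCC' : ∀ x, C (C' x) = x)
    (σ : H →L[ℂ] H) (hμ : IsSelfAdjoint μ) (hγ₀ : IsSelfAdjoint γ₀)
    (hW : ∀ x, schurμ C' e μ (W x) = x) (hm : ∀ θ, m₅₅ C' e b γ₀ W (m₅₅' θ) = θ)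
    {ν₁ c₁ c₂ c₃ : ℝ} (hc₁ : 0 < c₁) (h₁ : ∀ h, c₁ * ‖h‖ ^ 2 ≤ (inner ℂ h (schurμ C' e μ h)).re)
    (hc₂ : 0 < c₂) (h₂ : ∀ θ, c₂ * ‖θ‖ ^ 2 ≤ (inner ℂ θ (m₅₅ C' e b γ₀ W θ)).re)
    (hc₃ : 0 < c₃) (h₃ : ∀ ν : ℝ, ν₁ ≤ ν → ∀ h,
      c₃ * ‖h‖ ^ 2 ≤ (inner ℂ h ((ν : ℂ) • m₄₄ C' e S ε m₅₅' h + σ h)).re) :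
    ∃ ν₀, ν₁ ≤ ν₀ ∧ ∃ c > 0, ∀ ν : ℝ, ν₀ ≤ ν → ∀ x₁ xG x₃ xθ,
      c * (‖x₁‖ ^ 2 + ‖xG‖ ^ 2 + ‖x₃‖ ^ 2 + ‖xθ‖ ^ 2) ≤
        (inner ℂ x₁ ((ν : ℂ) • (ε x₁ + adjoint e (C' (e x₁)) + S xθ) + σ x₁)).re
        + (inner ℂ xG ((ν : ℂ) • (C' xG + C' (e x₃) + C' (b xθ)))).re
        + (inner ℂ x₃ ((ν : ℂ) • (adjoint e (C' xG) + μ x₃))).re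
        + (inner ℂ xθ ((ν : ℂ) • (adjoint S x₁ + adjoint b (C' xG) + γ₀ xθ
            + adjoint b (C' (b xθ))))).re := by
  have hC' : IsSelfAdjoint C' := hC.of_rightInverse hCC'
  obtain ⟨K, hK, hrec⟩ := exists_sum_norm_sq_le_triangular hCC' e b
    (W ∘L adjoint e ∘L C' ∘L b) (m₅₅' ∘L adjoint S)
  set cm := min cC (min c₁ c₂)
  have hcm : 0 < cm := lt_min hcC (lt_min hc₁ hc₂)
  refine ⟨max ν₁ (c₃ / cm), le_max_left _ _, c₃ / K, div_pos hc₃ hK, fun ν hν x₁ xG x₃ xθ => ?_⟩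
  have hν₁ν : ν₁ ≤ ν := (le_max_left _ _).trans hν
  have hν0 : 0 ≤ ν := (div_pos hc₃ hcm).le.trans ((le_max_right _ _).trans hν)
  have hνcm : c₃ ≤ ν * cm := (div_le_iff₀ hcm).mp ((le_max_right _ _).trans hν)
  set g := xG + e x₃ + b xθ
  set h := x₃ - W (adjoint e (C' (b xθ)))
  set t := xθ + m₅₅' (adjoint S x₁)
  have hg : cm * ‖C' g‖ ^ 2 ≤ (inner ℂ g (C' g)).re :=
    calc cm * ‖C' g‖ ^ 2 ≤ cC * ‖C' g‖ ^ 2 := by gcongr; exact min_le_left _ _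
      _ ≤ (inner ℂ (C' g) (C (C' g))).re := hCcoer _
      _ = (inner ℂ g (C' g)).re := by rw [hCC', Complex.re_inner_comm]
  have hh : cm * ‖h‖ ^ 2 ≤ (inner ℂ h (schurμ C' e μ h)).re :=
    (mul_le_mul_of_nonneg_right ((min_le_right _ _).trans (min_le_left _ _)) (sq_nonneg _)).trans
      (h₁ h)
  have ht : cm * ‖t‖ ^ 2 ≤ (inner ℂ t (m₅₅ C' e b γ₀ W t)).re :=
    (mul_le_mul_of_nonneg_right ((min_le_right _ _).trans (min_le_right _ _)) (sq_nonneg _)).trans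
      (h₂ t)
  have hsquares : c₃ * (‖C' g‖ ^ 2 + ‖h‖ ^ 2 + ‖t‖ ^ 2) ≤ ν * ((inner ℂ g (C' g)).re
      + (inner ℂ h (schurμ C' e μ h)).re + (inner ℂ t (m₅₅ C' e b γ₀ W t)).re) :=
    calc c₃ * (‖C' g‖ ^ 2 + ‖h‖ ^ 2 + ‖t‖ ^ 2)
        ≤ ν * (cm * ‖C' g‖ ^ 2 + cm * ‖h‖ ^ 2 + cm * ‖t‖ ^ 2) := by
          rw [← mul_add, ← mul_add, ← mul_assoc]; gcongr
      _ ≤ _ := by gcongr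
  have hrec' : ‖x₁‖ ^ 2 + ‖xG‖ ^ 2 + ‖x₃‖ ^ 2 + ‖xθ‖ ^ 2 ≤
      K * (‖x₁‖ ^ 2 + ‖C' g‖ ^ 2 + ‖h‖ ^ 2 + ‖t‖ ^ 2) := hrec x₁ xG x₃ xθ
  have key := congrArg (fun w : ℂ => ν * w.re)
    (inner_middle_eq S ε m₅₅' hC' hμ hγ₀ hW hm x₁ xG x₃ xθ)
  have hx := h₃ ν hν₁ν x₁
  simp only [inner_add_right, Complex.add_re, Complex.re_inner_ofReal_smul] at key hx ⊢
  calc c₃ / K * (‖x₁‖ ^ 2 + ‖xG‖ ^ 2 + ‖x₃‖ ^ 2 + ‖xθ‖ ^ 2)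
      ≤ c₃ / K * (K * (‖x₁‖ ^ 2 + ‖C' g‖ ^ 2 + ‖h‖ ^ 2 + ‖t‖ ^ 2)) := by gcongr
    _ = c₃ * (‖x₁‖ ^ 2 + ‖C' g‖ ^ 2 + ‖h‖ ^ 2 + ‖t‖ ^ 2) := by field_simp
    _ ≤ _ := by linarith

end MiddleBlock

open ContinuousLinearMap in
theorem stmt14_general {H₀ G H Hθ Hq B₁ B₂ B₃ : Type*}
    [NormedAddCommGroup H₀] [InnerProductSpace ℂ H₀]
    [NormedAddCommGroup G] [InnerProductSpace ℂ G] [CompleteSpace G]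
    [NormedAddCommGroup H] [InnerProductSpace ℂ H] [CompleteSpace H]
    [NormedAddCommGroup Hθ] [InnerProductSpace ℂ Hθ] [CompleteSpace Hθ]
    [NormedAddCommGroup Hq] [InnerProductSpace ℂ Hq]
    [NormedAddCommGroup B₁] [InnerProductSpace ℂ B₁] [CompleteSpace B₁]
    [NormedAddCommGroup B₂] [InnerProductSpace ℂ B₂] [CompleteSpace B₂]
    [NormedAddCommGroup B₃] [InnerProductSpace ℂ B₃] [CompleteSpace B₃]
    -- the mass density `ρ`
    (ρ : H₀ →L[ℂ] H₀)
    (cρ : ℝ) (hcρ : 0 < cρ) (hρcoer : ∀ v : H₀, cρ * ‖v‖ ^ 2 ≤ (inner ℂ v (ρ v) : ℂ).re)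
    -- the elasticity tensor `C`, with bounded inverse `C'`
    (C : G →L[ℂ] G) (hCsa : IsSelfAdjoint C)
    (cC : ℝ) (hcC : 0 < cC) (hCcoer : ∀ T : G, cC * ‖T‖ ^ 2 ≤ (inner ℂ T (C T) : ℂ).re)
    (C' : G →L[ℂ] G) (hC'₁ : ∀ x, C (C' x) = x)
    -- the coupling and material operators
    (e : H →L[ℂ] G) (b : Hθ →L[ℂ] G) (p : Hθ →L[ℂ] H)
    (ε μ σ : H →L[ℂ] H) (hμsa : IsSelfAdjoint μ)
    (γ₀ : Hθ →L[ℂ] Hθ) (hγ₀sa : IsSelfAdjoint γ₀)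
    -- the Maxwell–Cattaneo–Vernotte coefficients, `κ₀` bijective with inverse `κ₀'`
    (κ₁ : Hq →L[ℂ] Hq)
    (κ₀' : Hq →L[ℂ] Hq)
    -- the boundary operators, `C_b = curl_BD` skew-adjoint
    (β : B₁ →L[ℂ] B₂) (Q : B₂ →L[ℂ] B₃) (α : B₃ →L[ℂ] B₃)
    (C_b : B₂ →L[ℂ] B₂) (hCb : adjoint C_b = -C_b)
    -- `W` is the bounded inverse of `μ - e* C⁻¹ e`
    (W : H →L[ℂ] H)
    (hW₁ : ∀ x, μ (W x) - (adjoint e) (C' (e (W x))) = x)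
    -- `m₅₅'` is the bounded inverse of `m₅₅ = γ₀ - b* C⁻¹ e (μ - e* C⁻¹ e)⁻¹ e* C⁻¹ b`
    (m₅₅' : Hθ →L[ℂ] Hθ)
    (hm₅₅'₁ : ∀ θ, γ₀ (m₅₅' θ)
      - (adjoint b) (C' (e (W ((adjoint e) (C' (b (m₅₅' θ))))))) = θ)
    -- the positivity hypotheses
    (ν₁ : ℝ) (hν₁ : ‖α‖ < ν₁)
    (c₁ : ℝ) (hc₁ : 0 < c₁)
    (h₁ : ∀ h : H, c₁ * ‖h‖ ^ 2 ≤ (inner ℂ h (μ h - (adjoint e) (C' (e h))) : ℂ).re)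
    (c₂ : ℝ) (hc₂ : 0 < c₂)
    (h₂ : ∀ θ : Hθ, c₂ * ‖θ‖ ^ 2 ≤
      (inner ℂ θ (γ₀ θ - (adjoint b) (C' (e (W ((adjoint e) (C' (b θ))))))) : ℂ).re)
    (c₃ : ℝ) (hc₃ : 0 < c₃)
    -- `Re (ν m₄₄ + σ) ≥ c₃` for all `ν ≥ ν₁`, with
    -- `m₄₄ = ε + e* C⁻¹ e - (p + e* C⁻¹ b) m₅₅⁻¹ (p + e* C⁻¹ b)*`
    (h₃ : ∀ ν : ℝ, ν₁ ≤ ν → ∀ h : H, c₃ * ‖h‖ ^ 2 ≤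
      (inner ℂ h ((ν : ℂ) • (ε h + (adjoint e) (C' (e h))
          - (p + (adjoint e).comp (C'.comp b))
              (m₅₅' ((adjoint (p + (adjoint e).comp (C'.comp b))) h))) + σ h) : ℂ).re)
    (c₄ : ℝ) (hc₄ : 0 < c₄)
    -- `Re (ν κ₁ + κ₀⁻¹) ≥ c₄` for all `ν ≥ ν₁`
    (h₄ : ∀ ν : ℝ, ν₁ ≤ ν → ∀ q : Hq, c₄ * ‖q‖ ^ 2 ≤
      (inner ℂ q ((ν : ℂ) • κ₁ q + κ₀' q) : ℂ).re) :
    ∃ ν₀, ν₁ ≤ ν₀ ∧ ∃ c > 0, ∀ ν : ℝ, ν₀ ≤ ν → ∀ z : ℂ, ν ≤ z.re →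
      -- `Tz` is the boundary impedance block `T(z)` and `Kz = 𝒦(z)` its bounded inverse
      ∀ Tz Kz : WithLp 2 (B₁ × WithLp 2 (B₂ × B₃)) →L[ℂ] WithLp 2 (B₁ × WithLp 2 (B₂ × B₃)),
        (∀ (x : B₁) (y : B₂) (w : B₃),
          Tz ((WithLp.equiv 2 (B₁ × WithLp 2 (B₂ × B₃))).symm
              (x, (WithLp.equiv 2 (B₂ × B₃)).symm (y, w))) =
            (WithLp.equiv 2 (B₁ × WithLp 2 (B₂ × B₃))).symm
              (x - (adjoint β) y - (adjoint β) ((adjoint Q) w),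
                (WithLp.equiv 2 (B₂ × B₃)).symm
                  (β x + y - C_b ((adjoint Q) w),
                    Q (β x) - Q (C_b y) + w + z⁻¹ • α w))) →
        (∀ v, Tz (Kz v) = v) → (∀ v, Kz (Tz v) = v) →
        ∀ (v₀ : H₀) (x₁ : H) (xG : G) (x₃ : H) (xθ : Hθ)
          (vb : WithLp 2 (B₁ × WithLp 2 (B₂ × B₃))) (q : Hq),
          c * (‖v₀‖ ^ 2 + ‖x₁‖ ^ 2 + ‖xG‖ ^ 2 + ‖x₃‖ ^ 2 + ‖xθ‖ ^ 2 + ‖vb‖ ^ 2 + ‖q‖ ^ 2) ≤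
            ((inner ℂ v₀ ((ν : ℂ) • ρ v₀) : ℂ)
              + inner ℂ x₁ ((ν : ℂ) • (ε x₁ + (adjoint e) (C' (e x₁))
                  + ((p + (adjoint e).comp (C'.comp b)) xθ)) + σ x₁)
              + inner ℂ xG ((ν : ℂ) • (C' xG + C' (e x₃) + C' (b xθ)))
              + inner ℂ x₃ ((ν : ℂ) • ((adjoint e) (C' xG) + μ x₃))
              + inner ℂ xθ ((ν : ℂ) • ((adjoint (p + (adjoint e).comp (C'.comp b))) x₁
                  + (adjoint b) (C' xG) + γ₀ xθ + (adjoint b) (C' (b xθ))))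
              + inner ℂ vb (Kz vb)
              + inner ℂ q ((ν : ℂ) • κ₁ q + κ₀' q)).re := by
  obtain ⟨ν₀, hν₁ν₀, cM, hcM, hmid⟩ := middle_block_coercive (p + (adjoint e).comp (C'.comp b))
    ε m₅₅' hCsa hcC hCcoer hC'₁ σ hμsa hγ₀sa hW₁ hm₅₅'₁ hc₁ h₁ hc₂ h₂ hc₃ h₃
  obtain ⟨cB, hcB, hbdry⟩ := impedance_inverse_coercive (β := β) (Q := Q) hCb hν₁
  have hν₁0 : 0 < ν₁ := (norm_nonneg α).trans_lt hν₁
  obtain ⟨c, hc, hcρ', hcM', hcB', hc₄'⟩ : ∃ c > 0, c ≤ ν₁ * cρ ∧ c ≤ cM ∧ c ≤ cB ∧ c ≤ c₄ :=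
    ⟨min (min (ν₁ * cρ) cM) (min cB c₄), by positivity,
      (min_le_left _ _).trans (min_le_left _ _), (min_le_left _ _).trans (min_le_right _ _),
      (min_le_right _ _).trans (min_le_left _ _), (min_le_right _ _).trans (min_le_right _ _)⟩
  refine ⟨ν₀, hν₁ν₀, c, hc, ?_⟩
  intro ν hν z hz Tz Kz hT hTK _ v₀ x₁ xG x₃ xθ vb q
  have hν₁ν : ν₁ ≤ ν := hν₁ν₀.trans hν
  have hρ : ν₁ * cρ * ‖v₀‖ ^ 2 ≤ (inner ℂ v₀ ((ν : ℂ) • ρ v₀)).re := by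
    rw [Complex.re_inner_ofReal_smul, mul_assoc]
    exact mul_le_mul hν₁ν (hρcoer v₀) (by positivity) (hν₁0.le.trans hν₁ν)
  have hM := hmid ν hν x₁ xG x₃ xθ
  have hB := hbdry z (hν₁ν.trans hz) Tz Kz hT hTK vb
  have hq := h₄ ν hν₁ν q
  simp only [Complex.add_re]
  have h0 := mul_le_mul_of_nonneg_right hcρ' (sq_nonneg ‖v₀‖)
  have h1 := mul_le_mul_of_nonneg_right hcM'
    (by positivity : 0 ≤ ‖x₁‖ ^ 2 + ‖xG‖ ^ 2 + ‖x₃‖ ^ 2 + ‖xθ‖ ^ 2)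
  have h2 := mul_le_mul_of_nonneg_right hcB' (sq_nonneg ‖vb‖)
  have h3 := mul_le_mul_of_nonneg_right hc₄' (sq_nonneg ‖q‖)
  linarith

open ContinuousLinearMap in
/-- The uniform positive-definiteness estimate `ν𝒩 + Re ℳ(z) ≫ 0` for the
thermo-piezo-electromagnetic material law with impedance boundary conditions: under the
well-posedness hypotheses on `ρ, C, e, b, p, ε, μ, σ, γ₀, κ₀, κ₁` and the boundary operators
`β, Q, α, C_b`, there are `ν₀ ≥ ν₁` and `c > 0` such that for all `ν ≥ ν₀` and `Re z ≥ ν`, the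
block operator `ν·diag(ρ, 𝒩', 0, κ₁) + diag(0, ℳ', 𝒦(z), κ₀⁻¹)` has real part `≥ c`, where
`𝒦(z)` is the inverse of the boundary impedance block `T(z)`. -/
theorem stmt14 {H₀ G H Hθ Hq B₁ B₂ B₃ : Type*}
    [NormedAddCommGroup H₀] [InnerProductSpace ℂ H₀] [CompleteSpace H₀]
    [NormedAddCommGroup G] [InnerProductSpace ℂ G] [CompleteSpace G]
    [NormedAddCommGroup H] [InnerProductSpace ℂ H] [CompleteSpace H]
    [NormedAddCommGroup Hθ] [InnerProductSpace ℂ Hθ] [CompleteSpace Hθ]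
    [NormedAddCommGroup Hq] [InnerProductSpace ℂ Hq] [CompleteSpace Hq]
    [NormedAddCommGroup B₁] [InnerProductSpace ℂ B₁] [CompleteSpace B₁]
    [NormedAddCommGroup B₂] [InnerProductSpace ℂ B₂] [CompleteSpace B₂]
    [NormedAddCommGroup B₃] [InnerProductSpace ℂ B₃] [CompleteSpace B₃]
    -- the mass density `ρ`
    (ρ : H₀ →L[ℂ] H₀) (hρsa : IsSelfAdjoint ρ)
    (cρ : ℝ) (hcρ : 0 < cρ) (hρcoer : ∀ v : H₀, cρ * ‖v‖ ^ 2 ≤ (inner ℂ v (ρ v) : ℂ).re)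
    -- the elasticity tensor `C`, with bounded inverse `C'`
    (C : G →L[ℂ] G) (hCsa : IsSelfAdjoint C)
    (cC : ℝ) (hcC : 0 < cC) (hCcoer : ∀ T : G, cC * ‖T‖ ^ 2 ≤ (inner ℂ T (C T) : ℂ).re)
    (C' : G →L[ℂ] G) (hC'₁ : ∀ x, C (C' x) = x) (hC'₂ : ∀ x, C' (C x) = x)
    -- the coupling and material operators
    (e : H →L[ℂ] G) (b : Hθ →L[ℂ] G) (p : Hθ →L[ℂ] H)
    (ε μ σ : H →L[ℂ] H) (hεsa : IsSelfAdjoint ε) (hμsa : IsSelfAdjoint μ)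
    (γ₀ : Hθ →L[ℂ] Hθ) (hγ₀sa : IsSelfAdjoint γ₀)
    -- the Maxwell–Cattaneo–Vernotte coefficients, `κ₀` bijective with inverse `κ₀'`
    (κ₀ κ₁ : Hq →L[ℂ] Hq) (hκ₁sa : IsSelfAdjoint κ₁)
    (κ₀' : Hq →L[ℂ] Hq) (hκ₀'₁ : ∀ x, κ₀ (κ₀' x) = x) (hκ₀'₂ : ∀ x, κ₀' (κ₀ x) = x)
    -- the boundary operators, `C_b = curl_BD` skew-adjoint
    (β : B₁ →L[ℂ] B₂) (Q : B₂ →L[ℂ] B₃) (α : B₃ →L[ℂ] B₃)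
    (C_b : B₂ →L[ℂ] B₂) (hCb : adjoint C_b = -C_b)
    -- `W` is the bounded inverse of `μ - e* C⁻¹ e`
    (W : H →L[ℂ] H)
    (hW₁ : ∀ x, μ (W x) - (adjoint e) (C' (e (W x))) = x)
    (hW₂ : ∀ x, W (μ x - (adjoint e) (C' (e x))) = x)
    -- `m₅₅'` is the bounded inverse of `m₅₅ = γ₀ - b* C⁻¹ e (μ - e* C⁻¹ e)⁻¹ e* C⁻¹ b`
    (m₅₅' : Hθ →L[ℂ] Hθ)
    (hm₅₅'₁ : ∀ θ, γ₀ (m₅₅' θ)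
      - (adjoint b) (C' (e (W ((adjoint e) (C' (b (m₅₅' θ))))))) = θ)
    (hm₅₅'₂ : ∀ θ, m₅₅' (γ₀ θ
      - (adjoint b) (C' (e (W ((adjoint e) (C' (b θ))))))) = θ)
    -- the positivity hypotheses
    (ν₁ : ℝ) (hν₁ : ‖α‖ < ν₁)
    (c₁ : ℝ) (hc₁ : 0 < c₁)
    (h₁ : ∀ h : H, c₁ * ‖h‖ ^ 2 ≤ (inner ℂ h (μ h - (adjoint e) (C' (e h))) : ℂ).re)
    (c₂ : ℝ) (hc₂ : 0 < c₂)
    (h₂ : ∀ θ : Hθ, c₂ * ‖θ‖ ^ 2 ≤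
      (inner ℂ θ (γ₀ θ - (adjoint b) (C' (e (W ((adjoint e) (C' (b θ))))))) : ℂ).re)
    (c₃ : ℝ) (hc₃ : 0 < c₃)
    -- `Re (ν m₄₄ + σ) ≥ c₃` for all `ν ≥ ν₁`, with
    -- `m₄₄ = ε + e* C⁻¹ e - (p + e* C⁻¹ b) m₅₅⁻¹ (p + e* C⁻¹ b)*`
    (h₃ : ∀ ν : ℝ, ν₁ ≤ ν → ∀ h : H, c₃ * ‖h‖ ^ 2 ≤
      (inner ℂ h ((ν : ℂ) • (ε h + (adjoint e) (C' (e h))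
          - (p + (adjoint e).comp (C'.comp b))
              (m₅₅' ((adjoint (p + (adjoint e).comp (C'.comp b))) h))) + σ h) : ℂ).re)
    (c₄ : ℝ) (hc₄ : 0 < c₄)
    -- `Re (ν κ₁ + κ₀⁻¹) ≥ c₄` for all `ν ≥ ν₁`
    (h₄ : ∀ ν : ℝ, ν₁ ≤ ν → ∀ q : Hq, c₄ * ‖q‖ ^ 2 ≤
      (inner ℂ q ((ν : ℂ) • κ₁ q + κ₀' q) : ℂ).re) :
    ∃ ν₀, ν₁ ≤ ν₀ ∧ ∃ c > 0, ∀ ν : ℝ, ν₀ ≤ ν → ∀ z : ℂ, ν ≤ z.re →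
      -- `Tz` is the boundary impedance block `T(z)` and `Kz = 𝒦(z)` its bounded inverse
      ∀ Tz Kz : WithLp 2 (B₁ × WithLp 2 (B₂ × B₃)) →L[ℂ] WithLp 2 (B₁ × WithLp 2 (B₂ × B₃)),
        (∀ (x : B₁) (y : B₂) (w : B₃),
          Tz ((WithLp.equiv 2 (B₁ × WithLp 2 (B₂ × B₃))).symm
              (x, (WithLp.equiv 2 (B₂ × B₃)).symm (y, w))) =
            (WithLp.equiv 2 (B₁ × WithLp 2 (B₂ × B₃))).symm
              (x - (adjoint β) y - (adjoint β) ((adjoint Q) w),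
                (WithLp.equiv 2 (B₂ × B₃)).symm
                  (β x + y - C_b ((adjoint Q) w),
                    Q (β x) - Q (C_b y) + w + z⁻¹ • α w))) →
        (∀ v, Tz (Kz v) = v) → (∀ v, Kz (Tz v) = v) →
        ∀ (v₀ : H₀) (x₁ : H) (xG : G) (x₃ : H) (xθ : Hθ)
          (vb : WithLp 2 (B₁ × WithLp 2 (B₂ × B₃))) (q : Hq),
          c * (‖v₀‖ ^ 2 + ‖x₁‖ ^ 2 + ‖xG‖ ^ 2 + ‖x₃‖ ^ 2 + ‖xθ‖ ^ 2 + ‖vb‖ ^ 2 + ‖q‖ ^ 2) ≤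
            ((inner ℂ v₀ ((ν : ℂ) • ρ v₀) : ℂ)
              + inner ℂ x₁ ((ν : ℂ) • (ε x₁ + (adjoint e) (C' (e x₁))
                  + ((p + (adjoint e).comp (C'.comp b)) xθ)) + σ x₁)
              + inner ℂ xG ((ν : ℂ) • (C' xG + C' (e x₃) + C' (b xθ)))
              + inner ℂ x₃ ((ν : ℂ) • ((adjoint e) (C' xG) + μ x₃))
              + inner ℂ xθ ((ν : ℂ) • ((adjoint (p + (adjoint e).comp (C'.comp b))) x₁
                  + (adjoint b) (C' xG) + γ₀ xθ + (adjoint b) (C' (b xθ))))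
              + inner ℂ vb (Kz vb)
              + inner ℂ q ((ν : ℂ) • κ₁ q + κ₀' q)).re :=
  stmt14_general ρ cρ hcρ hρcoer C hCsa cC hcC hCcoer C' hC'₁ e b p ε μ σ hμsa γ₀ hγ₀sa κ₁ κ₀' β Q α
    C_b hCb W hW₁ m₅₅' hm₅₅'₁ ν₁ hν₁ c₁ hc₁ h₁ c₂ hc₂ h₂ c₃ hc₃ h₃ c₄ hc₄ h₄
end
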